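/- arXiv:1811.04865 — 7 statements merged into one kernel-verified Lean document; each statement's English description precedes it below -/
import Mathlib

section
/- Let I be an interval and f, g : I → ℝ be continuous strictly monotone functions with g increasing. Then the quasi-arithmetic mean generated by f is pointwise less than or equal to that generated by g (for all finite vectors of arguments) if and only if g ∘ f⁻¹ is convex on f(I). -/
open Filter Set

/-- `m` is the value of the quasi-arithmetic mean `A^[f]` on the tuple `v` from `I`,
i.e. `m ∈ I` and `f m = (f v₁ + ⋯ + f vₙ)/n`. -/
def IsQAM (I : Set ℝ) (f : ℝ → ℝ) {n : ℕ} (v : Fin n → ℝ) (m : ℝ) : Prop :=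
  m ∈ I ∧ f m = (∑ i, f (v i)) / n

/-- `A^[f] ≤ A^[g]` pointwise on all (nonempty) finite tuples from `I` (the relation `f ≺ g`). -/
def QALE (I : Set ℝ) (f g : ℝ → ℝ) : Prop :=
  ∀ (n : ℕ), 0 < n → ∀ (v : Fin n → ℝ), (∀ i, v i ∈ I) →
    ∀ a b : ℝ, IsQAM I f v a → IsQAM I g v b → a ≤ b

/-- `A^[f] = A^[g]` on all (nonempty) finite tuples from `I`. -/
def QAEQ (I : Set ℝ) (f g : ℝ → ℝ) : Prop :=
  ∀ (n : ℕ), 0 < n → ∀ (v : Fin n → ℝ), (∀ i, v i ∈ I) →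
    ∀ a b : ℝ, IsQAM I f v a → IsQAM I g v b → a = b

/-!
Jensen's inequality for the convex function `h = g ∘ f⁻¹` on `f(I)` gives `f ≺ g`. Conversely,
applying `f ≺ g` to the tuple made of `k` copies of `x` and `n - k` copies of `y` gives the
convexity inequality of `h` at every rational weight `k / n`. Since `h` is monotone, the value of
`h` at `t • p + (1 - t) • q` is bounded by its value at a nearby rational weight `⌊n t⌋₊ / n`
approached from the correct side, and letting `n → ∞` gives convexity.
-/

open Function Topology

lemma Set.OrdConnected.convex_image {I : Set ℝ} (hI : I.OrdConnected) {f : ℝ → ℝ}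
    (hf : ContinuousOn f I) : Convex ℝ (f '' I) :=
  convex_iff_ordConnected.2 (hI.isPreconnected.image f hf).ordConnected

lemma Convex.mul_add_one_sub_mul_mem {s : Set ℝ} (hs : Convex ℝ s) {x y t : ℝ} (hx : x ∈ s)
    (hy : y ∈ s) (ht : t ∈ Icc (0 : ℝ) 1) : t * x + (1 - t) * y ∈ s :=
  hs hx hy ht.1 (sub_nonneg.2 ht.2) (add_sub_cancel _ _)

lemma natCast_div_mem_Icc {k n : ℕ} (hk : k ≤ n) : (k / n : ℝ) ∈ Icc (0 : ℝ) 1 :=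
  ⟨by positivity, div_le_one_of_le₀ (by exact_mod_cast hk) n.cast_nonneg⟩

lemma StrictMonoOn.monotoneOn_invFunOn {α β : Type*} [LinearOrder α] [Nonempty α] [Preorder β]
    {f : α → β} {s : Set α} (hf : StrictMonoOn f s) : MonotoneOn (invFunOn f s) (f '' s) := by
  rintro _ ⟨x, hx, rfl⟩ _ ⟨y, hy, rfl⟩ hxy
  rw [hf.injOn.leftInvOn_invFunOn hx, hf.injOn.leftInvOn_invFunOn hy]
  exact (hf.le_iff_le hx hy).1 hxy

lemma StrictAntiOn.antitoneOn_invFunOn {α β : Type*} [LinearOrder α] [Nonempty α] [Preorder β]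
    {f : α → β} {s : Set α} (hf : StrictAntiOn f s) : AntitoneOn (invFunOn f s) (f '' s) := by
  rintro _ ⟨x, hx, rfl⟩ _ ⟨y, hy, rfl⟩ hxy
  rw [hf.injOn.leftInvOn_invFunOn hx, hf.injOn.leftInvOn_invFunOn hy]
  exact (hf.le_iff_ge hx hy).1 hxy

lemma ConvexOn.map_sum_div_card_le {ι : Type*} [Fintype ι] [Nonempty ι] {s : Set ℝ}
    {φ : ℝ → ℝ} (hφ : ConvexOn ℝ s φ) {p : ι → ℝ} (hp : ∀ i, p i ∈ s) :
    φ ((∑ i, p i) / Fintype.card ι) ≤ (∑ i, φ (p i)) / Fintype.card ι := by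
  simpa [Finset.centerMass, div_eq_inv_mul] using
    hφ.map_centerMass_le (t := Finset.univ) (w := fun _ ↦ (1 : ℝ)) (fun _ _ ↦ zero_le_one)
      (by simpa using Fintype.card_pos) (fun i _ ↦ hp i)

lemma le_of_antitoneOn_of_forall_natCast_div_le {u ℓ : ℝ → ℝ} (hu : AntitoneOn u (Icc 0 1))
    (hℓ : Continuous ℓ) (h : ∀ k n : ℕ, k ≤ n → 0 < n → u (k / n) ≤ ℓ (k / n)) {t : ℝ}
    (ht : t ∈ Icc (0 : ℝ) 1) : u t ≤ ℓ t := by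
  have hlim : Tendsto (fun n : ℕ ↦ (⌊t * n⌋₊ : ℝ) / n) atTop (𝓝 t) :=
    (tendsto_nat_floor_mul_div_atTop ht.1).comp tendsto_natCast_atTop_atTop
  refine ge_of_tendsto ((hℓ.tendsto t).comp hlim) ?_
  filter_upwards [eventually_gt_atTop 0] with n hn
  have hk : ⌊t * n⌋₊ ≤ n := Nat.floor_le_of_le (mul_le_of_le_one_left n.cast_nonneg ht.2)
  have hle : (⌊t * n⌋₊ : ℝ) / n ≤ t :=
    div_le_of_le_mul₀ n.cast_nonneg ht.1 (Nat.floor_le (mul_nonneg ht.1 n.cast_nonneg))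
  exact (hu (natCast_div_mem_Icc hk) ht hle).trans (h _ _ hk hn)

lemma convexOn_of_monotoneOn_or_antitoneOn_of_natCast_div_le {s : Set ℝ} {h : ℝ → ℝ}
    (hs : Convex ℝ s) (hmono : MonotoneOn h s ∨ AntitoneOn h s)
    (hrat : ∀ x ∈ s, ∀ y ∈ s, ∀ k n : ℕ, k ≤ n → 0 < n →
      h ((k / n) * x + (1 - k / n) * y) ≤ (k / n) * h x + (1 - k / n) * h y) :
    ConvexOn ℝ s h := by
  have hseg : ∀ ⦃x⦄, x ∈ s → ∀ ⦃y⦄, y ∈ s →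
      MapsTo (fun r : ℝ ↦ r * x + (1 - r) * y) (Icc 0 1) s :=
    fun x hx y hy r hr ↦ hs.mul_add_one_sub_mul_mem hx hy hr
  have key : ∀ ⦃x⦄, x ∈ s → ∀ ⦃y⦄, y ∈ s →
      AntitoneOn (fun r : ℝ ↦ h (r * x + (1 - r) * y)) (Icc 0 1) →
      ∀ t ∈ Icc (0 : ℝ) 1, h (t * x + (1 - t) * y) ≤ t * h x + (1 - t) * h y :=
    fun x hx y hy hanti t ht ↦ le_of_antitoneOn_of_forall_natCast_div_le
      (ℓ := fun r ↦ r * h x + (1 - r) * h y) hanti (by fun_prop) (hrat x hx y hy) ht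
  refine LinearOrder.convexOn_of_lt hs fun x hx y hy hxy a b ha hb hab ↦ ?_
  obtain rfl : b = 1 - a := by linarith
  simp only [smul_eq_mul]
  rcases hmono with hm | hm
  · exact key hx hy (hm.comp_AntitoneOn (fun r _ r' _ hr ↦ by nlinarith) (hseg hx hy)) a
      ⟨ha.le, by linarith⟩
  · have := key hy hx (hm.comp_MonotoneOn (fun r _ r' _ hr ↦ by nlinarith) (hseg hy hx)) (1 - a)
      ⟨hb.le, by linarith⟩
    rwa [sub_sub_cancel, add_comm, add_comm ((1 - a) * h y)] at this

section QuasiArithmeticMean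

variable {I : Set ℝ} {f g : ℝ → ℝ}

lemma qale_of_convexOn_comp_invFunOn (hinj : InjOn f I) (hg : StrictMonoOn g I)
    (hconv : ConvexOn ℝ (f '' I) (g ∘ invFunOn f I)) : QALE I f g := by
  intro n hn v hv a b ⟨ha, hfa⟩ ⟨hb, hgb⟩
  have : Nonempty (Fin n) := Fin.pos_iff_nonempty.1 hn
  have hjensen := hconv.map_sum_div_card_le (p := fun i ↦ f (v i)) fun i ↦ mem_image_of_mem f (hv i)
  simp only [Fintype.card_fin, ← hfa, comp_apply, hinj.leftInvOn_invFunOn ha,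
    hinj.leftInvOn_invFunOn (hv _), ← hgb] at hjensen
  exact (hg.le_iff_le ha hb).1 hjensen

lemma QALE.comp_invFunOn_natCast_div_le (hq : QALE I f g) (hfI : Convex ℝ (f '' I))
    (hgI : Convex ℝ (g '' I)) (hinj : InjOn f I) (hg : MonotoneOn g I) :
    ∀ p ∈ f '' I, ∀ q ∈ f '' I, ∀ k n : ℕ, k ≤ n → 0 < n →
      (g ∘ invFunOn f I) ((k / n) * p + (1 - k / n) * q) ≤
        (k / n) * (g ∘ invFunOn f I) p + (1 - k / n) * (g ∘ invFunOn f I) q := by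
  rintro _ ⟨x, hx, rfl⟩ _ ⟨y, hy, rfl⟩ k n hk hn
  simp only [comp_apply, hinj.leftInvOn_invFunOn hx, hinj.leftInvOn_invFunOn hy]
  obtain ⟨m, rfl⟩ := Nat.exists_eq_add_of_le hk
  set v := Fin.append (fun _ : Fin k ↦ x) (fun _ : Fin m ↦ y)
  have hv : ∀ i, v i ∈ I := Fin.addCases (fun _ ↦ by simpa [v]) (fun _ ↦ by simpa [v])
  have hmean : ∀ φ : ℝ → ℝ, (∑ i, φ (v i)) / ((k + m : ℕ) : ℝ) =
      (k / (k + m : ℕ)) * φ x + (1 - k / (k + m : ℕ)) * φ y := by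
    intro φ
    have hkm : (k : ℝ) + m ≠ 0 := by exact_mod_cast hn.ne'
    simp only [v, Fin.sum_univ_add, Fin.append_left, Fin.append_right, Finset.sum_const,
      Finset.card_univ, Fintype.card_fin, nsmul_eq_mul, Nat.cast_add]
    field_simp
    ring
  obtain ⟨a, ha, hfa⟩ := hfI.mul_add_one_sub_mul_mem (mem_image_of_mem f hx)
    (mem_image_of_mem f hy) (natCast_div_mem_Icc hk)
  obtain ⟨b, hb, hgb⟩ := hgI.mul_add_one_sub_mul_mem (mem_image_of_mem g hx)
    (mem_image_of_mem g hy) (natCast_div_mem_Icc hk)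
  rw [← hfa, hinj.leftInvOn_invFunOn ha, ← hgb]
  exact hg ha hb (hq _ hn v hv a b ⟨ha, by rw [hfa, hmean]⟩ ⟨hb, by rw [hgb, hmean]⟩)

end QuasiArithmeticMean

/-- for continuous strictly monotone `f, g` on an interval `I` with `g`
increasing, `f ≺ g` iff `g ∘ f⁻¹` is convex on `f(I)`. -/
theorem qale_iff_convexOn_comp_invFunOn
    (I : Set ℝ) (hI : I.OrdConnected)
    (f g : ℝ → ℝ)
    (hfc : ContinuousOn f I) (hgc : ContinuousOn g I)
    (hf : StrictMonoOn f I ∨ StrictAntiOn f I)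
    (hg : StrictMonoOn g I) :
    QALE I f g ↔ ConvexOn ℝ (f '' I) (g ∘ Function.invFunOn f I) := by
  have hinj : InjOn f I := hf.elim StrictMonoOn.injOn StrictAntiOn.injOn
  have hmaps : MapsTo (invFunOn f I) (f '' I) I := (surjOn_image f I).mapsTo_invFunOn
  have hmono : MonotoneOn (g ∘ invFunOn f I) (f '' I) ∨ AntitoneOn (g ∘ invFunOn f I) (f '' I) :=
    hf.imp (fun hf ↦ hg.monotoneOn.comp hf.monotoneOn_invFunOn hmaps)
      (fun hf ↦ hg.monotoneOn.comp_AntitoneOn hf.antitoneOn_invFunOn hmaps)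
  refine ⟨fun hq ↦ ?_, qale_of_convexOn_comp_invFunOn hinj hg⟩
  exact convexOn_of_monotoneOn_or_antitoneOn_of_natCast_div_le (hI.convex_image hfc) hmono
    (hq.comp_invFunOn_natCast_div_le (hI.convex_image hfc) (hI.convex_image hgc) hinj
      hg.monotoneOn)
end

section
/- Let I be an interval and f, g : I → ℝ be differentiable strictly monotone functions with f′ and g′ nowhere vanishing, both f and g increasing. Then f ≺ g (i.e. A^[f] ≤ A^[g] pointwise) if and only if the ratio g′/f′ is nondecreasing on I. -/
open Filter Set Topology

lemma my_slope_pos {I : Set ℝ} {f : ℝ → ℝ} (hf : StrictMonoOn f I)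
    {x t : ℝ} (hx : x ∈ I) (ht : t ∈ I) (hne : t ≠ x) : 0 < slope f x t := by
  rw [slope_def_field]
  rcases hne.lt_or_gt with h | h
  · have := hf ht hx h
    apply div_pos_of_neg_of_neg <;> linarith
  · have := hf hx ht h
    apply div_pos <;> linarith

lemma my_deriv_pos {I : Set ℝ} (hI : I.OrdConnected) {f : ℝ → ℝ}
    (hfd : ∀ x ∈ I, DifferentiableAt ℝ f x) (hf : StrictMonoOn f I)
    {x y : ℝ} (hx : x ∈ I) (hy : y ∈ I) (hne : y ≠ x) (h0 : deriv f x ≠ 0) :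
    0 < deriv f x := by
  have hclos : x ∈ closure (I \ {x}) := by
    rcases hne.lt_or_gt with h | h
    · refine closure_mono (show Ico y x ⊆ I \ {x} from fun t ht =>
        ⟨hI.out hy hx ⟨ht.1, ht.2.le⟩, ht.2.ne⟩) ?_
      rw [closure_Ico h.ne]; exact ⟨h.le, le_refl x⟩
    · refine closure_mono (show Ioc x y ⊆ I \ {x} from fun t ht =>
        ⟨hI.out hx hy ⟨ht.1.le, ht.2⟩, ht.1.ne'⟩) ?_
      rw [closure_Ioc h.ne]; exact ⟨le_refl x, h.le⟩
  have hNB : (𝓝[I \ {x}] x).NeBot := mem_closure_iff_nhdsWithin_neBot.mp hclos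
  have htend : Tendsto (slope f x) (𝓝[I \ {x}] x) (𝓝 (deriv f x)) :=
    (hasDerivAt_iff_tendsto_slope.mp (hfd x hx).hasDerivAt).mono_left
      (nhdsWithin_mono _ fun t ht => ht.2)
  have h1 : 0 ≤ deriv f x := ge_of_tendsto htend
    (eventually_nhdsWithin_of_forall fun t ht => (my_slope_pos hf hx ht.1 ht.2).le)
  exact h1.lt_of_ne (Ne.symm h0)

lemma my_star_of_qale {I : Set ℝ} (hI : I.OrdConnected) {f g : ℝ → ℝ}
    (hgd : ∀ x ∈ I, DifferentiableAt ℝ g x) (hg : StrictMonoOn g I)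
    (hq : QALE I f g) :
    ∀ u ∈ I, ∀ w ∈ I, u ≤ w → ∀ m ∈ I, 2 * f m = f u + f w → 2 * g m ≤ g u + g w := by
  intro u hu w hw huw m hm hfm
  have hgc : ContinuousOn g (Icc u w) := fun t ht =>
    ((hgd t (hI.out hu hw ht)).continuousAt).continuousWithinAt
  have hguw : g u ≤ g w := hg.monotoneOn hu hw huw
  obtain ⟨b, hbmem, hgb⟩ := intermediate_value_Icc huw hgc
    (show (g u + g w) / 2 ∈ Icc (g u) (g w) from ⟨by linarith, by linarith⟩)
  have hbI : b ∈ I := hI.out hu hw hbmem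
  have hab : m ≤ b := by
    refine hq 2 (by norm_num) ![u, w] (by intro i; fin_cases i <;> assumption) m b
      ⟨hm, ?_⟩ ⟨hbI, ?_⟩
    · rw [Fin.sum_univ_two]
      simp only [Matrix.cons_val_zero, Matrix.cons_val_one, Matrix.head_cons]
      push_cast
      linarith
    · rw [Fin.sum_univ_two]
      simp only [Matrix.cons_val_zero, Matrix.cons_val_one, Matrix.head_cons]
      push_cast
      linarith
  have := hg.monotoneOn hm hbI hab
  linarith

lemma my_ratio_mono {I : Set ℝ} (hI : I.OrdConnected) {f g : ℝ → ℝ}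
    (hfd : ∀ x ∈ I, DifferentiableAt ℝ f x) (hgd : ∀ x ∈ I, DifferentiableAt ℝ g x)
    (hf0 : ∀ x ∈ I, deriv f x ≠ 0)
    (hf : StrictMonoOn f I)
    (hstar : ∀ u ∈ I, ∀ w ∈ I, u ≤ w → ∀ m ∈ I, 2 * f m = f u + f w → 2 * g m ≤ g u + g w) :
    MonotoneOn (fun x => deriv g x / deriv f x) I := by
  intro x hx y hy hxy
  rcases eq_or_lt_of_le hxy with rfl | hlt
  · exact le_refl _
  simp only
  set Δ := f y - f x with hΔdef
  have hΔ : 0 < Δ := sub_pos.mpr (hf hx hy hlt)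
  have hIcc : Icc x y ⊆ I := hI.out hx hy
  have hfc : ContinuousOn f (Icc x y) := fun t ht =>
    ((hfd t (hIcc ht)).continuousAt).continuousWithinAt
  have hex1 : ∀ k : ℕ, ∃ t ∈ Icc x y, f t = f x + Δ / 2 ^ k := by
    intro k
    have h2k : (1:ℝ) ≤ 2 ^ k := one_le_pow₀ (by norm_num)
    have hpos : (0:ℝ) < 2 ^ k := by positivity
    have hmem : f x + Δ / 2 ^ k ∈ Icc (f x) (f y) := by
      constructor
      · have : 0 < Δ / 2 ^ k := by positivity
        linarith
      · have : Δ / 2 ^ k ≤ Δ := by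
          rw [div_le_iff₀ hpos]; nlinarith
        have hy' : f x + Δ = f y := by rw [hΔdef]; ring
        linarith
    exact intermediate_value_Icc hlt.le hfc hmem
  have hex2 : ∀ k : ℕ, ∃ t ∈ Icc x y, f t = f y - Δ / 2 ^ k := by
    intro k
    have h2k : (1:ℝ) ≤ 2 ^ k := one_le_pow₀ (by norm_num)
    have hpos : (0:ℝ) < 2 ^ k := by positivity
    have hmem : f y - Δ / 2 ^ k ∈ Icc (f x) (f y) := by
      constructor
      · have : Δ / 2 ^ k ≤ Δ := by rw [div_le_iff₀ hpos]; nlinarith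
        have hy' : f x + Δ = f y := by rw [hΔdef]; ring
        linarith
      · have : 0 < Δ / 2 ^ k := by positivity
        linarith
    exact intermediate_value_Icc hlt.le hfc hmem
  choose m hm hfm using hex1
  choose p hp hfp using hex2
  have hmI : ∀ k, m k ∈ I := fun k => hIcc (hm k)
  have hpI : ∀ k, p k ∈ I := fun k => hIcc (hp k)
  have hmne : ∀ k, m k ≠ x := by
    intro k h
    have h1 := hfm k
    rw [h] at h1
    have hpos : (0:ℝ) < Δ / 2 ^ k := by positivity
    linarith
  have hpne : ∀ k, p k ≠ y := by
    intro k h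
    have h1 := hfp k
    rw [h] at h1
    have hpos : (0:ℝ) < Δ / 2 ^ k := by positivity
    linarith
  have hfmd : ∀ k, f (m k) - f x = Δ / 2 ^ k := fun k => by rw [hfm k]; ring
  have hfpd : ∀ k, f y - f (p k) = Δ / 2 ^ k := fun k => by rw [hfp k]; ring
  have gstep1 : ∀ k, 2 * g (m (k + 1)) ≤ g x + g (m k) := by
    intro k
    refine hstar x hx (m k) (hmI k) (hm k).1 (m (k + 1)) (hmI (k + 1)) ?_
    rw [hfm (k + 1), hfm k, pow_succ]
    have : (2:ℝ) ^ k ≠ 0 := by positivity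
    field_simp
    ring
  have gstep2 : ∀ k, 2 * g (p (k + 1)) ≤ g (p k) + g y := by
    intro k
    refine hstar (p k) (hpI k) y hy (hp k).2 (p (k + 1)) (hpI (k + 1)) ?_
    rw [hfp (k + 1), hfp k, pow_succ]
    have : (2:ℝ) ^ k ≠ 0 := by positivity
    field_simp
    ring
  set S : ℕ → ℝ := fun k => (g (m k) - g x) / (Δ / 2 ^ k) with hSdef
  set T : ℕ → ℝ := fun k => (g y - g (p k)) / (Δ / 2 ^ k) with hTdef
  have hSmono : ∀ k, S (k + 1) ≤ S k := by
    intro k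
    have hd : (0:ℝ) < Δ / 2 ^ k := by positivity
    have hA := gstep1 k
    have heq : Δ / 2 ^ (k + 1) = (Δ / 2 ^ k) / 2 := by rw [pow_succ]; ring
    simp only [hSdef]
    rw [heq, div_le_div_iff₀ (by linarith) hd]
    nlinarith [mul_nonneg hd.le (show (0:ℝ) ≤ g x + g (m k) - 2 * g (m (k + 1)) by linarith)]
  have hTmono : ∀ k, T k ≤ T (k + 1) := by
    intro k
    have hd : (0:ℝ) < Δ / 2 ^ k := by positivity
    have hA := gstep2 k
    have heq : Δ / 2 ^ (k + 1) = (Δ / 2 ^ k) / 2 := by rw [pow_succ]; ring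
    simp only [hTdef]
    rw [heq, div_le_div_iff₀ hd (by linarith)]
    nlinarith [mul_nonneg hd.le (show (0:ℝ) ≤ g (p k) + g y - 2 * g (p (k + 1)) by linarith)]
  have hSle : ∀ k, S k ≤ S 0 := by
    intro k
    induction k with
    | zero => exact le_refl _
    | succ n ih => exact (hSmono n).trans ih
  have hTge : ∀ k, T 0 ≤ T k := by
    intro k
    induction k with
    | zero => exact le_refl _
    | succ n ih => exact ih.trans (hTmono n)
  have hm0 : m 0 = y := by
    apply hf.injOn (hmI 0) hy
    rw [hfm 0]; simp [hΔdef]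
  have hp0 : p 0 = x := by
    apply hf.injOn (hpI 0) hx
    rw [hfp 0]; simp [hΔdef]
  have hS0 : S 0 = (g y - g x) / Δ := by simp [hSdef, hm0]
  have hT0 : T 0 = (g y - g x) / Δ := by simp [hTdef, hp0]
  -- limits of the sequences
  have hmx : Tendsto m atTop (𝓝 x) := by
    rw [Metric.tendsto_atTop]
    intro ε hε
    set δ := min ε (y - x) with hδdef
    have hδ : 0 < δ := lt_min hε (by linarith)
    have hδy : x + δ ≤ y := by have := min_le_right ε (y - x); linarith
    have hxδI : x + δ ∈ I := hIcc ⟨by linarith, hδy⟩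
    have hfδ : f x < f (x + δ) := hf hx hxδI (by linarith)
    obtain ⟨N, hN⟩ : ∃ N : ℕ, Δ / 2 ^ N < f (x + δ) - f x := by
      obtain ⟨N, hN⟩ := pow_unbounded_of_one_lt (Δ / (f (x + δ) - f x)) (one_lt_two (α := ℝ))
      refine ⟨N, ?_⟩
      rw [div_lt_iff₀ (sub_pos.mpr hfδ)] at hN
      rw [div_lt_iff₀ (pow_pos (show (0:ℝ) < 2 by norm_num) N)]
      nlinarith
    refine ⟨N, fun n hn => ?_⟩
    have hle : Δ / 2 ^ n ≤ Δ / 2 ^ N :=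
      div_le_div_of_nonneg_left hΔ.le (pow_pos (by norm_num) N)
        (pow_le_pow_right₀ (by norm_num) hn)
    have hflt : f (m n) < f (x + δ) := by rw [hfm n]; linarith
    have hmlt : m n < x + δ := by
      by_contra h
      push_neg at h
      exact absurd (hf.monotoneOn hxδI (hmI n) h) (by linarith)
    have hxm : x ≤ m n := (hm n).1
    rw [Real.dist_eq, abs_of_nonneg (by linarith)]
    have := min_le_left ε (y - x)
    linarith
  have hpy : Tendsto p atTop (𝓝 y) := by
    rw [Metric.tendsto_atTop]
    intro ε hε
    set δ := min ε (y - x) with hδdef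
    have hδ : 0 < δ := lt_min hε (by linarith)
    have hδy : x ≤ y - δ := by have := min_le_right ε (y - x); linarith
    have hyδI : y - δ ∈ I := hIcc ⟨hδy, by linarith⟩
    have hfδ : f (y - δ) < f y := hf hyδI hy (by linarith)
    obtain ⟨N, hN⟩ : ∃ N : ℕ, Δ / 2 ^ N < f y - f (y - δ) := by
      obtain ⟨N, hN⟩ := pow_unbounded_of_one_lt (Δ / (f y - f (y - δ))) (one_lt_two (α := ℝ))
      refine ⟨N, ?_⟩
      rw [div_lt_iff₀ (sub_pos.mpr hfδ)] at hN
      rw [div_lt_iff₀ (pow_pos (show (0:ℝ) < 2 by norm_num) N)]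
      nlinarith
    refine ⟨N, fun n hn => ?_⟩
    have hle : Δ / 2 ^ n ≤ Δ / 2 ^ N :=
      div_le_div_of_nonneg_left hΔ.le (pow_pos (by norm_num) N)
        (pow_le_pow_right₀ (by norm_num) hn)
    have hflt : f (y - δ) < f (p n) := by rw [hfp n]; linarith
    have hplt : y - δ < p n := by
      by_contra h
      push_neg at h
      exact absurd (hf.monotoneOn (hpI n) hyδI h) (by linarith)
    have hpm : p n ≤ y := (hp n).2
    rw [Real.dist_eq, abs_of_nonpos (by linarith)]
    have := min_le_left ε (y - x)
    linarith
  have hmx' : Tendsto m atTop (𝓝[≠] x) :=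
    tendsto_nhdsWithin_of_tendsto_nhds_of_eventually_within _ hmx
      (Eventually.of_forall fun k => hmne k)
  have hpy' : Tendsto p atTop (𝓝[≠] y) :=
    tendsto_nhdsWithin_of_tendsto_nhds_of_eventually_within _ hpy
      (Eventually.of_forall fun k => hpne k)
  have Tfx : Tendsto (fun k => slope f x (m k)) atTop (𝓝 (deriv f x)) :=
    (hasDerivAt_iff_tendsto_slope.mp (hfd x hx).hasDerivAt).comp hmx'
  have Tgx : Tendsto (fun k => slope g x (m k)) atTop (𝓝 (deriv g x)) :=
    (hasDerivAt_iff_tendsto_slope.mp (hgd x hx).hasDerivAt).comp hmx'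
  have Tfy : Tendsto (fun k => slope f y (p k)) atTop (𝓝 (deriv f y)) :=
    (hasDerivAt_iff_tendsto_slope.mp (hfd y hy).hasDerivAt).comp hpy'
  have Tgy : Tendsto (fun k => slope g y (p k)) atTop (𝓝 (deriv g y)) :=
    (hasDerivAt_iff_tendsto_slope.mp (hgd y hy).hasDerivAt).comp hpy'
  have TS : Tendsto S atTop (𝓝 (deriv g x / deriv f x)) := by
    refine (Tgx.div Tfx (hf0 x hx)).congr fun k => ?_
    simp only [Pi.div_apply]
    have h1 : m k - x ≠ 0 := sub_ne_zero.mpr (hmne k)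
    have h2 : f (m k) - f x ≠ 0 := by rw [hfmd k]; positivity
    simp only [slope_def_field, hSdef]
    rw [← hfmd k]
    field_simp
  have TT : Tendsto T atTop (𝓝 (deriv g y / deriv f y)) := by
    refine (Tgy.div Tfy (hf0 y hy)).congr fun k => ?_
    simp only [Pi.div_apply]
    have h1 : p k - y ≠ 0 := sub_ne_zero.mpr (hpne k)
    have h2 : f (p k) - f y ≠ 0 := by
      have := hfpd k
      intro h
      have hpos : (0:ℝ) < Δ / 2 ^ k := by positivity
      rw [show f (p k) = f y from by linarith] at this
      linarith
    have h2' : f y - f (p k) ≠ 0 := by rw [hfpd k]; positivity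
    simp only [slope_def_field, hTdef]
    rw [← hfpd k]
    field_simp
    ring
  have h1 : deriv g x / deriv f x ≤ S 0 := le_of_tendsto TS (Eventually.of_forall hSle)
  have h2 : T 0 ≤ deriv g y / deriv f y := ge_of_tendsto TT (Eventually.of_forall hTge)
  rw [hS0] at h1
  rw [hT0] at h2
  linarith

lemma my_qale_of_mono {I : Set ℝ} (hI : I.OrdConnected) {f g : ℝ → ℝ}
    (hfd : ∀ x ∈ I, DifferentiableAt ℝ f x) (hgd : ∀ x ∈ I, DifferentiableAt ℝ g x)
    (hf0 : ∀ x ∈ I, deriv f x ≠ 0) (hg0 : ∀ x ∈ I, deriv g x ≠ 0)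
    (hf : StrictMonoOn f I) (hg : StrictMonoOn g I)
    (hmono : MonotoneOn (fun x => deriv g x / deriv f x) I) : QALE I f g := by
  intro n hn v hv a b hqa hqb
  obtain ⟨ha, hfa⟩ := hqa
  obtain ⟨hb, hgb⟩ := hqb
  rcases eq_or_ne a b with rfl | hab
  · exact le_refl a
  have hwit : ∀ t ∈ I, ∃ y ∈ I, y ≠ t := by
    intro t ht
    rcases eq_or_ne t a with rfl | h
    · exact ⟨b, hb, Ne.symm hab⟩
    · exact ⟨a, ha, Ne.symm h⟩
  have hfp : ∀ t ∈ I, 0 < deriv f t := by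
    intro t ht
    obtain ⟨y, hy, hyt⟩ := hwit t ht
    exact my_deriv_pos hI hfd hf ht hy hyt (hf0 t ht)
  have hgp : ∀ t ∈ I, 0 < deriv g t := by
    intro t ht
    obtain ⟨y, hy, hyt⟩ := hwit t ht
    exact my_deriv_pos hI hgd hg ht hy hyt (hg0 t ht)
  set c := deriv g b / deriv f b with hcdef
  have hc : 0 < c := div_pos (hgp b hb) (hfp b hb)
  set ψ : ℝ → ℝ := fun t => g t - g b - c * (f t - f b) with hψ
  have hψd : ∀ s ∈ I, HasDerivAt ψ (deriv g s - c * deriv f s) s := fun s hs =>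
    ((hgd s hs).hasDerivAt.sub_const _).sub
      (((hfd s hs).hasDerivAt.sub_const _).const_mul c)
  have key : ∀ t ∈ I, 0 ≤ ψ t := by
    intro t ht
    have hψb : ψ b = 0 := by simp [hψ]
    rcases le_total b t with hbt | htb
    · have hsub : Icc b t ⊆ I := hI.out hb ht
      have hmono' : MonotoneOn ψ (Icc b t) := by
        apply monotoneOn_of_deriv_nonneg (convex_Icc b t)
        · exact fun s hs => ((hψd s (hsub hs)).differentiableAt.continuousAt).continuousWithinAt
        · exact fun s hs =>
            ((hψd s (hsub (interior_subset hs))).differentiableAt).differentiableWithinAt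
        · intro s hs
          rw [interior_Icc] at hs
          have hsI : s ∈ I := hsub ⟨hs.1.le, hs.2.le⟩
          rw [(hψd s hsI).deriv]
          have h1 : c ≤ deriv g s / deriv f s := hmono hb hsI hs.1.le
          have h2 := (le_div_iff₀ (hfp s hsI)).mp h1
          linarith
      have := hmono' (left_mem_Icc.mpr hbt) (right_mem_Icc.mpr hbt) hbt
      rw [hψb] at this
      exact this
    · have hsub : Icc t b ⊆ I := hI.out ht hb
      have hanti : AntitoneOn ψ (Icc t b) := by
        apply antitoneOn_of_deriv_nonpos (convex_Icc t b)
        · exact fun s hs => ((hψd s (hsub hs)).differentiableAt.continuousAt).continuousWithinAt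
        · exact fun s hs =>
            ((hψd s (hsub (interior_subset hs))).differentiableAt).differentiableWithinAt
        · intro s hs
          rw [interior_Icc] at hs
          have hsI : s ∈ I := hsub ⟨hs.1.le, hs.2.le⟩
          rw [(hψd s hsI).deriv]
          have h1 : deriv g s / deriv f s ≤ c := hmono hsI hb hs.2.le
          have h2 := (div_le_iff₀ (hfp s hsI)).mp h1
          linarith
      have := hanti (left_mem_Icc.mpr htb) (right_mem_Icc.mpr htb) htb
      rw [hψb] at this
      exact this
  have hn' : (0:ℝ) < n := Nat.cast_pos.mpr hn
  have hsum : 0 ≤ ∑ i, ψ (v i) := Finset.sum_nonneg fun i _ => key (v i) (hv i)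
  have hsumf : ∑ i, f (v i) = n * f a := by rw [hfa]; field_simp
  have hsumg : ∑ i, g (v i) = n * g b := by rw [hgb]; field_simp
  have hexp : ∑ i, ψ (v i) =
      (∑ i, g (v i)) - n * g b - c * ((∑ i, f (v i)) - n * f b) := by
    simp only [hψ, Finset.sum_sub_distrib, ← Finset.mul_sum, Finset.sum_const,
      Finset.card_univ, Fintype.card_fin, nsmul_eq_mul]
  rw [hexp, hsumf, hsumg] at hsum
  have hfab : f a ≤ f b := by
    by_contra h
    push_neg at h
    nlinarith [mul_pos (mul_pos hc hn') (sub_pos.mpr h)]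
  by_contra hba
  push_neg at hba
  exact absurd (hf hb ha hba) (by linarith)

/-- for differentiable increasing `f, g` on an interval `I` with nowhere
vanishing derivatives, `f ≺ g` iff `g'/f'` is nondecreasing on `I`. -/
theorem qale_iff_ratio_deriv_monotoneOn
    (I : Set ℝ) (hI : I.OrdConnected)
    (f g : ℝ → ℝ)
    (hfd : ∀ x ∈ I, DifferentiableAt ℝ f x) (hgd : ∀ x ∈ I, DifferentiableAt ℝ g x)
    (hf0 : ∀ x ∈ I, deriv f x ≠ 0) (hg0 : ∀ x ∈ I, deriv g x ≠ 0)
    (hf : StrictMonoOn f I) (hg : StrictMonoOn g I) :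
    QALE I f g ↔ MonotoneOn (fun x => deriv g x / deriv f x) I := by
  constructor
  · intro hq
    exact my_ratio_mono hI hfd hgd hf0 hf (my_star_of_qale hI hgd hg hq)
  · intro hmono
    exact my_qale_of_mono hI hfd hgd hf0 hg0 hf hg hmono
end

section
/- Let I be an interval and f, g : I → ℝ be continuous strictly monotone functions. Then A^[f] = A^[g] (on all finite tuples from I) if and only if there exist real numbers α ≠ 0 and β such that g = α·f + β. -/
open Filter Set

lemma isQAM_neg (I : Set ℝ) (f : ℝ → ℝ) {n : ℕ} (v : Fin n → ℝ) (m : ℝ) :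
    IsQAM I (fun x => -(f x)) v m ↔ IsQAM I f v m := by
  unfold IsQAM
  rw [Finset.sum_neg_distrib, neg_div, neg_eq_iff_eq_neg, neg_neg]

lemma qaeq_neg_left (I : Set ℝ) (f g : ℝ → ℝ) (h : QAEQ I f g) :
    QAEQ I (fun x => -(f x)) g := by
  intro n hn v hv a b ha hb
  exact h n hn v hv a b ((isQAM_neg I f v a).mp ha) hb

lemma qaeq_neg_right (I : Set ℝ) (f g : ℝ → ℝ) (h : QAEQ I f g) :
    QAEQ I f (fun x => -(g x)) := by
  intro n hn v hv a b ha hb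
  exact h n hn v hv a b ha ((isQAM_neg I g v b).mp hb)

/-- rational-weight Jensen transfer -/
lemma ratkey (I : Set ℝ) (hI : I.OrdConnected) (f g : ℝ → ℝ)
    (hfc : ContinuousOn f I) (hgc : ContinuousOn g I)
    (hf : StrictMonoOn f I) (hg : StrictMonoOn g I)
    (hqa : QAEQ I f g) {u v : ℝ} (hu : u ∈ I) (hv : v ∈ I) (huv : u ≤ v)
    (q : ℚ) (hq0 : 0 ≤ q) (hq1 : q ≤ 1) {m : ℝ} (hm : m ∈ I)
    (hfm : f m = q * f u + (1 - q) * f v) :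
    g m = q * g u + (1 - q) * g v := by
  have hIcc : Icc u v ⊆ I := hI.out hu hv
  have hgu : g u ≤ g v := (hg.monotoneOn) hu hv huv
  have hq0' : (0:ℝ) ≤ (q:ℝ) := by exact_mod_cast hq0
  have hq1' : (q:ℝ) ≤ 1 := by exact_mod_cast hq1
  -- get b with g b = target
  have hbval : (q : ℝ) * g u + (1 - q) * g v ∈ Icc (g u) (g v) := by
    constructor <;> nlinarith
  obtain ⟨b, hbmem, hb⟩ := intermediate_value_Icc huv (hgc.mono hIcc) hbval
  have hbI : b ∈ I := hIcc hbmem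
  -- set up the tuple
  set n := q.den with hn
  set k := q.num.toNat with hk
  have hnpos : 0 < n := q.den_pos
  have hcast : ((k : ℝ)) / (n : ℝ) = (q : ℝ) := by
    rw [Rat.cast_def]
    congr 1
    exact_mod_cast Int.toNat_of_nonneg (Rat.num_nonneg.mpr hq0)
  have hnR : (0:ℝ) < (n:ℝ) := by exact_mod_cast hnpos
  have hkn : k ≤ n := by
    have h2 : (k:ℝ) ≤ (n:ℝ) := by
      rw [← hcast] at hq1'
      exact (div_le_one hnR).mp hq1'
    exact_mod_cast h2
  set w : Fin n → ℝ := fun i => if (i : ℕ) < k then u else v with hw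
  have hwI : ∀ i, w i ∈ I := by
    intro i; by_cases h : (i:ℕ) < k <;> simp [hw, h, hu, hv]
  have hsumf : ∀ φ : ℝ → ℝ, ∑ i, φ (w i) = k * φ u + ((n:ℝ) - k) * φ v := by
    intro φ
    have : ∀ i : Fin n, φ (w i) = if (i:ℕ) < k then φ u else φ v := by
      intro i; by_cases h : (i:ℕ) < k <;> simp [hw, h]
    rw [Finset.sum_congr rfl (fun i _ => this i)]
    rw [Fin.sum_univ_eq_sum_range (fun i => if i < k then φ u else φ v) n,
      Finset.range_eq_Ico, ← Finset.sum_Ico_consecutive _ (Nat.zero_le k) hkn]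
    rw [Finset.sum_congr rfl (fun i hi => if_pos (Finset.mem_Ico.mp hi).2),
      Finset.sum_congr rfl (fun i hi => if_neg (not_lt.mpr (Finset.mem_Ico.mp hi).1))]
    rw [Finset.sum_const, Finset.sum_const, Nat.card_Ico, Nat.card_Ico,
      nsmul_eq_mul, nsmul_eq_mul]
    push_cast [Nat.cast_sub hkn, Nat.sub_zero]
    ring
  have key : ∀ φ : ℝ → ℝ, (∑ i, φ (w i)) / n = q * φ u + (1 - q) * φ v := by
    intro φ
    rw [hsumf φ]
    rw [← hcast]
    field_simp
  have ha : IsQAM I f w m := ⟨hm, by rw [key f, hfm]⟩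
  have hbq : IsQAM I g w b := ⟨hbI, by rw [key g, hb]⟩
  have : m = b := hqa n hnpos w hwI m b ha hbq
  rw [this, hb]

lemma collinear (I : Set ℝ) (hI : I.OrdConnected) (f g : ℝ → ℝ)
    (hfc : ContinuousOn f I) (hgc : ContinuousOn g I)
    (hf : StrictMonoOn f I) (hg : StrictMonoOn g I)
    (hqa : QAEQ I f g) {u v m : ℝ} (hu : u ∈ I) (hv : v ∈ I) (hm : m ∈ I)
    (h1 : u ≤ m) (h2 : m ≤ v) :
    (f v - f u) * g m = (f v - f m) * g u + (f m - f u) * g v := by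
  have huv : u ≤ v := h1.trans h2
  rcases eq_or_lt_of_le huv with heq | hlt
  · -- u = v, so m = u = v
    subst heq
    have : m = u := le_antisymm h2 h1
    subst this
    ring
  -- u < v
  have hfuv : f u < f v := hf hu hv hlt
  have hfum : f u ≤ f m := by
    rcases eq_or_lt_of_le h1 with h | h
    · rw [h]
    · exact (hf hu hm h).le
  have hfmv : f m ≤ f v := by
    rcases eq_or_lt_of_le h2 with h | h
    · rw [h]
    · exact (hf hm hv h).le
  have hgu : g u ≤ g v := hg.monotoneOn hu hv huv
  have hIcc : Icc u v ⊆ I := hI.out hu hv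
  set t : ℝ := (f v - f m) / (f v - f u) with ht
  have hD : f v - f u > 0 := by linarith
  have ht0 : 0 ≤ t := div_nonneg (by linarith) hD.le
  have ht1 : t ≤ 1 := (div_le_one hD).mpr (by linarith)
  have hfmt : f m = t * f u + (1 - t) * f v := by
    field_simp [ht]
    have h := div_mul_cancel₀ (f v - f m) hD.ne'
    rw [← ht] at h
    linear_combination h
  -- rational inequalities
  have hle : ∀ q : ℚ, 0 ≤ q → (q:ℝ) ≤ t → g m ≤ q * g u + (1 - q) * g v := by
    intro q hq0 hqt
    have hq0' : (0:ℝ) ≤ q := by exact_mod_cast hq0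
    have hq1 : (q:ℝ) ≤ 1 := hqt.trans ht1
    have hcval : (q:ℝ) * f u + (1 - q) * f v ∈ Icc (f u) (f v) := by
      constructor <;> nlinarith
    obtain ⟨mq, hmqmem, hmq⟩ := intermediate_value_Icc huv (hfc.mono hIcc) hcval
    have hmqI : mq ∈ I := hIcc hmqmem
    have hge : f m ≤ f mq := by
      rw [hmq, hfmt]
      nlinarith
    have hmmq : m ≤ mq := by
      by_contra hc
      push_neg at hc
      exact absurd (hf hmqI hm hc) (by linarith)
    have := ratkey I hI f g hfc hgc hf hg hqa hu hv huv q hq0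
      (by exact_mod_cast hq1) hmqI hmq
    calc g m ≤ g mq := hg.monotoneOn hm hmqI hmmq
    _ = q * g u + (1 - q) * g v := this
  have hge : ∀ q : ℚ, (t:ℝ) ≤ q → (q:ℝ) ≤ 1 → (q:ℝ) * g u + (1 - q) * g v ≤ g m := by
    intro q hqt hq1
    have hq0 : (0:ℝ) ≤ q := ht0.trans hqt
    have hcval : (q:ℝ) * f u + (1 - q) * f v ∈ Icc (f u) (f v) := by
      constructor <;> nlinarith
    obtain ⟨mq, hmqmem, hmq⟩ := intermediate_value_Icc huv (hfc.mono hIcc) hcval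
    have hmqI : mq ∈ I := hIcc hmqmem
    have hge' : f mq ≤ f m := by
      rw [hmq, hfmt]
      nlinarith
    have hmmq : mq ≤ m := by
      by_contra hc
      push_neg at hc
      exact absurd (hf hm hmqI hc) (by linarith)
    have := ratkey I hI f g hfc hgc hf hg hqa hu hv huv q
      (by exact_mod_cast hq0) (by exact_mod_cast hq1) hmqI hmq
    calc (q:ℝ) * g u + (1 - q) * g v = g mq := this.symm
    _ ≤ g m := hg.monotoneOn hmqI hm hmmq
  -- conclude g m = t * g u + (1 - t) * g v
  have hgm : g m = t * g u + (1 - t) * g v := by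
    rcases eq_or_lt_of_le ht0 with h0 | h0
    · -- t = 0: f m = f v so m = v
      have hfmv' : f m = f v := by rw [hfmt, ← h0]; ring
      have : m = v := by
        by_contra hc
        exact absurd (hf hm hv (lt_of_le_of_ne h2 hc)) (by linarith)
      rw [this, ← h0]; ring
    rcases eq_or_lt_of_le ht1 with h1' | h1' 
    · -- t = 1: m = u
      have hfmu : f m = f u := by rw [hfmt, h1']; ring
      have : m = u := by
        by_contra hc
        exact absurd (hf hu hm (lt_of_le_of_ne h1 (Ne.symm hc))) (by linarith)
      rw [this, h1']; ring
    -- 0 < t < 1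
    have hA : g m ≤ t * g u + (1 - t) * g v := by
      by_contra hc
      push_neg at hc
      set ε := g m - (t * g u + (1 - t) * g v) with hε
      have hεpos : 0 < ε := by linarith
      set δ := min t (ε / (g v - g u + 1)) with hδ
      have hδpos : 0 < δ := lt_min h0 (div_pos hεpos (by linarith))
      obtain ⟨q, hq1, hq2⟩ := exists_rat_btwn (show t - δ < t by linarith)
      have hq0 : (0:ℝ) ≤ q := by
        have : δ ≤ t := min_le_left _ _
        linarith
      have := hle q (by exact_mod_cast hq0) hq2.le
      have hdq : t - (q:ℝ) < δ := by linarith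
      have hδ2 : δ ≤ ε / (g v - g u + 1) := min_le_right _ _
      have : (q:ℝ) * g u + (1 - q) * g v - (t * g u + (1 - t) * g v)
          = (t - q) * (g v - g u) := by ring
      have hδε : δ * (g v - g u + 1) ≤ ε :=
        (le_div_iff₀ (show (0:ℝ) < g v - g u + 1 by linarith)).mp hδ2
      have hmul : (t - q) * (g v - g u) ≤ δ * (g v - g u) :=
        mul_le_mul_of_nonneg_right hdq.le (by linarith)
      nlinarith
    have hB : t * g u + (1 - t) * g v ≤ g m := by
      by_contra hc
      push_neg at hc
      set ε := (t * g u + (1 - t) * g v) - g m with hε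
      have hεpos : 0 < ε := by linarith
      set δ := min (1 - t) (ε / (g v - g u + 1)) with hδ
      have hδpos : 0 < δ := lt_min (by linarith) (div_pos hεpos (by linarith))
      obtain ⟨q, hq1, hq2⟩ := exists_rat_btwn (show t < t + δ by linarith)
      have hqle1 : (q:ℝ) ≤ 1 := by
        have : δ ≤ 1 - t := min_le_left _ _
        linarith
      have := hge q hq1.le hqle1
      have hdq : (q:ℝ) - t < δ := by linarith
      have hδ2 : δ ≤ ε / (g v - g u + 1) := min_le_right _ _
      have hδε : δ * (g v - g u + 1) ≤ ε :=
        (le_div_iff₀ (show (0:ℝ) < g v - g u + 1 by linarith)).mp hδ2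
      have hmul : ((q:ℝ) - t) * (g v - g u) ≤ δ * (g v - g u) :=
        mul_le_mul_of_nonneg_right hdq.le (by linarith)
      nlinarith
    linarith
  rw [hgm, ht]
  field_simp
  ring

lemma mainlem (I : Set ℝ) (hI : I.OrdConnected) (f g : ℝ → ℝ)
    (hfc : ContinuousOn f I) (hgc : ContinuousOn g I)
    (hf : StrictMonoOn f I) (hg : StrictMonoOn g I)
    (hqa : QAEQ I f g) :
    ∃ α β : ℝ, α ≠ 0 ∧ ∀ x ∈ I, g x = α * f x + β := by
  by_cases hsub : ∀ x ∈ I, ∀ y ∈ I, x = y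
  · rcases Set.eq_empty_or_nonempty I with he | ⟨x₀, hx₀⟩
    · exact ⟨1, 0, one_ne_zero, fun x hx => absurd hx (by simp [he])⟩
    · exact ⟨1, g x₀ - f x₀, one_ne_zero, fun x hx => by
        rw [hsub x hx x₀ hx₀]; ring⟩
  · push_neg at hsub
    obtain ⟨y, hy, z, hz, hyz⟩ := hsub
    obtain ⟨x₀, x₁, hx₀, hx₁, hlt⟩ : ∃ x₀ x₁, x₀ ∈ I ∧ x₁ ∈ I ∧ x₀ < x₁ := by
      rcases lt_or_gt_of_ne hyz with h | h
      · exact ⟨y, z, hy, hz, h⟩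
      · exact ⟨z, y, hz, hy, h⟩
    have hD : f x₀ < f x₁ := hf hx₀ hx₁ hlt
    have hG : g x₀ < g x₁ := hg hx₀ hx₁ hlt
    refine ⟨(g x₁ - g x₀) / (f x₁ - f x₀), g x₀ - (g x₁ - g x₀) / (f x₁ - f x₀) * f x₀,
      div_ne_zero (by linarith) (by linarith), fun x hx => ?_⟩
    have key : (f x₁ - f x₀) * g x = f x₁ * g x₀ - f x * g x₀ + f x * g x₁ - f x₀ * g x₁ := by
      rcases le_total x x₀ with hc | hc
      · have := collinear I hI f g hfc hgc hf hg hqa hx hx₁ hx₀ hc hlt.le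
        linarith [this]
      rcases le_total x x₁ with hc' | hc'
      · have := collinear I hI f g hfc hgc hf hg hqa hx₀ hx₁ hx hc hc'
        linarith [this]
      · have := collinear I hI f g hfc hgc hf hg hqa hx₀ hx hx₁ hlt.le hc'
        linarith [this]
    have hne : f x₁ - f x₀ ≠ 0 := by linarith
    field_simp
    linarith [key]


/-- for continuous strictly monotone `f, g` on an interval `I`,
`A^[f] = A^[g]` iff `g = α·f + β` on `I` for some `α ≠ 0` and `β`. -/
theorem qaeq_iff_affine
    (I : Set ℝ) (hI : I.OrdConnected)
    (f g : ℝ → ℝ)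
    (hfc : ContinuousOn f I) (hgc : ContinuousOn g I)
    (hf : StrictMonoOn f I ∨ StrictAntiOn f I)
    (hg : StrictMonoOn g I ∨ StrictAntiOn g I) :
    QAEQ I f g ↔ ∃ α β : ℝ, α ≠ 0 ∧ ∀ x ∈ I, g x = α * f x + β := by
  constructor
  · intro hqa
    have hginj : ∀ (h : StrictMonoOn g I ∨ StrictAntiOn g I), True := fun _ => trivial
    rcases hf with hf | hf <;> rcases hg with hg | hg
    · exact mainlem I hI f g hfc hgc hf hg hqa
    · obtain ⟨α, β, hα, hab⟩ := mainlem I hI f (fun x => -(g x)) hfc hgc.neg hf hg.neg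
        (fun n hn v hv a b ha hb => hqa n hn v hv a b ha ((isQAM_neg I g v b).mp hb))
      exact ⟨-α, -β, neg_ne_zero.mpr hα, fun x hx => by
        have := hab x hx; linarith⟩
    · obtain ⟨α, β, hα, hab⟩ := mainlem I hI (fun x => -(f x)) g hfc.neg hgc hf.neg hg
        (fun n hn v hv a b ha hb => hqa n hn v hv a b ((isQAM_neg I f v a).mp ha) hb)
      exact ⟨-α, β, neg_ne_zero.mpr hα, fun x hx => by
        have := hab x hx; linarith⟩
    · obtain ⟨α, β, hα, hab⟩ := mainlem I hI (fun x => -(f x)) (fun x => -(g x))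
        hfc.neg hgc.neg hf.neg hg.neg
        (fun n hn v hv a b ha hb => hqa n hn v hv a b
          ((isQAM_neg I f v a).mp ha) ((isQAM_neg I g v b).mp hb))
      exact ⟨α, -β, hα, fun x hx => by
        have := hab x hx; simp at this; linarith⟩
  · rintro ⟨α, β, hα, hab⟩
    intro n hn v hv a b ⟨haI, hfa⟩ ⟨hbI, hgb⟩
    have hginj : Set.InjOn g I := by
      rcases hg with hg | hg
      · exact hg.injOn
      · exact hg.injOn
    apply hginj haI hbI
    have hnR : (0:ℝ) < n := by exact_mod_cast hn
    have hsum : ∑ i, g (v i) = α * (∑ i, f (v i)) + n * β := by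
      rw [Finset.mul_sum]
      rw [show (n:ℝ) * β = ∑ _i : Fin n, β by
        rw [Finset.sum_const]; simp [mul_comm]]
      rw [← Finset.sum_add_distrib]
      exact Finset.sum_congr rfl fun i _ => hab (v i) (hv i)
    rw [hab a haI, hfa, hgb, hsum]
    field_simp
end

section
/- Let f : I → ℝ be convex on (a,b) and on (b,c) for a < b < c, and differentiable at b. Then f is convex on (a,c). -/
/-!
By continuity at `b`, convexity on `(a, b)` extends to `(a, b]` and convexity on `(b, c)` to
`[b, c)`. Differentiability at `b` then puts `f' b` between every secant slope ending at `b` and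
every secant slope starting at `b`. For three points `x < y < z` straddling `b`, both adjacent
slopes are compared with a slope through `b`, which gives the monotonicity of adjacent slopes that
characterises convexity on `(a, c)`.
-/

open Set Filter Topology

section slope

variable {𝕜 : Type*} [Field 𝕜] [LinearOrder 𝕜] [IsStrictOrderedRing 𝕜] {s : Set 𝕜}
  {f : 𝕜 → 𝕜} {x y z : 𝕜}

lemma ConvexOn.slope_le_slope_adjacent (hf : ConvexOn 𝕜 s f) (hx : x ∈ s) (hz : z ∈ s)
    (hxy : x < y) (hyz : y < z) : slope f x y ≤ slope f y z := by
  simpa only [slope_def_field] using hf.slope_mono_adjacent hx hz hxy hyz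

lemma convexOn_of_slope_le_slope_adjacent (hs : Convex 𝕜 s)
    (hf : ∀ {x y z : 𝕜}, x ∈ s → z ∈ s → x < y → y < z → slope f x y ≤ slope f y z) :
    ConvexOn 𝕜 s f :=
  convexOn_of_slope_mono_adjacent hs fun hx hz hxy hyz => by
    simpa only [slope_def_field] using hf hx hz hxy hyz

lemma slope_le_slope_left_of_slope_le_slope (hxy : x < y) (hyz : y < z)
    (h : slope f x y ≤ slope f y z) : slope f x y ≤ slope f x z := by
  simp only [slope_def_field] at h ⊢
  rw [div_le_div_iff₀ (by linarith) (by linarith)] at h ⊢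
  nlinarith

lemma slope_le_slope_right_of_slope_le_slope (hxy : x < y) (hyz : y < z)
    (h : slope f x y ≤ slope f y z) : slope f x z ≤ slope f y z := by
  simp only [slope_def_field] at h ⊢
  rw [div_le_div_iff₀ (by linarith) (by linarith)] at h ⊢
  nlinarith

lemma convexOn_Ioo_of_convexOn_Ioc_of_convexOn_Ico {a b c : 𝕜} (h₁ : ConvexOn 𝕜 (Ioc a b) f)
    (h₂ : ConvexOn 𝕜 (Ico b c) f)
    (hslope : ∀ x ∈ Ioo a b, ∀ z ∈ Ioo b c, slope f x b ≤ slope f b z) :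
    ConvexOn 𝕜 (Ioo a c) f := by
  refine convexOn_of_slope_le_slope_adjacent (convex_Ioo a c) fun {x y z} hx hz hxy hyz => ?_
  rcases le_or_gt z b with hzb | hbz
  · exact h₁.slope_le_slope_adjacent ⟨hx.1, (hxy.trans hyz).le.trans hzb⟩
      ⟨hx.1.trans (hxy.trans hyz), hzb⟩ hxy hyz
  rcases le_or_gt b x with hbx | hxb
  · exact h₂.slope_le_slope_adjacent ⟨hbx, hx.2⟩ ⟨hbx.trans (hxy.trans hyz).le, hz.2⟩ hxy hyz
  rcases lt_trichotomy y b with hyb | rfl | hby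
  · have hleft : slope f x y ≤ slope f y b :=
      h₁.slope_le_slope_adjacent ⟨hx.1, hxb.le⟩ ⟨hx.1.trans hxb, le_rfl⟩ hxy hyb
    exact hleft.trans <| slope_le_slope_left_of_slope_le_slope hyb hbz <|
      hslope y ⟨hx.1.trans hxy, hyb⟩ z ⟨hbz, hz.2⟩
  · exact hslope x ⟨hx.1, hxy⟩ z ⟨hyz, hz.2⟩
  · have hright : slope f b y ≤ slope f y z :=
      h₂.slope_le_slope_adjacent ⟨le_rfl, hbz.trans hz.2⟩ ⟨hbz.le, hz.2⟩ hby hyz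
    exact (slope_le_slope_right_of_slope_le_slope hxb hby <|
      hslope x ⟨hx.1, hxb⟩ y ⟨hby, hyz.trans hz.2⟩).trans hright

end slope

theorem ContinuousWithinAt.slope {𝕜 : Type*} [NontriviallyNormedField 𝕜] {f : 𝕜 → 𝕜}
    {s : Set 𝕜} {a b : 𝕜} (hf : ContinuousWithinAt f s b) (hab : b ≠ a) :
    ContinuousWithinAt (slope f a) s b := by
  rw [slope_fun_def_field]
  exact (hf.sub continuousWithinAt_const).div (continuousWithinAt_id.sub continuousWithinAt_const)
    (sub_ne_zero.2 hab)

section real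

variable {f : ℝ → ℝ} {a b c : ℝ}

lemma ConvexOn.convexOn_Ioc_of_continuousWithinAt (hf : ConvexOn ℝ (Ioo a b) f)
    (hb : ContinuousWithinAt f (Iio b) b) : ConvexOn ℝ (Ioc a b) f := by
  refine convexOn_of_slope_le_slope_adjacent (convex_Ioc a b) fun {x y z} hx hz hxy hyz => ?_
  rcases hz.2.lt_or_eq with hzb | rfl
  · exact hf.slope_le_slope_adjacent ⟨hx.1, (hxy.trans hyz).trans hzb⟩
      ⟨hx.1.trans (hxy.trans hyz), hzb⟩ hxy hyz
  · refine ge_of_tendsto (hb.slope hyz.ne') ?_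
    filter_upwards [Ioo_mem_nhdsLT hyz] with v hv
    exact hf.slope_le_slope_adjacent ⟨hx.1, hxy.trans hyz⟩ ⟨hx.1.trans (hxy.trans hv.1), hv.2⟩
      hxy hv.1

lemma ConvexOn.convexOn_Ico_of_continuousWithinAt (hf : ConvexOn ℝ (Ioo b c) f)
    (hb : ContinuousWithinAt f (Ioi b) b) : ConvexOn ℝ (Ico b c) f := by
  refine convexOn_of_slope_le_slope_adjacent (convex_Ico b c) fun {x y z} hx hz hxy hyz => ?_
  rcases hx.1.eq_or_lt with rfl | hbx
  · rw [slope_comm]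
    refine le_of_tendsto (hb.slope hxy.ne) ?_
    filter_upwards [Ioo_mem_nhdsGT hxy] with u hu
    rw [← slope_comm]
    exact hf.slope_le_slope_adjacent ⟨hu.1, (hu.2.trans hyz).trans hz.2⟩ ⟨hxy.trans hyz, hz.2⟩
      hu.2 hyz
  · exact hf.slope_le_slope_adjacent ⟨hbx, (hxy.trans hyz).trans hz.2⟩
      ⟨hbx.trans (hxy.trans hyz), hz.2⟩ hxy hyz

end real

theorem convexOn_glue_of_differentiableAt_general
    (f : ℝ → ℝ) (a b c : ℝ)
    (h1 : ConvexOn ℝ (Set.Ioo a b) f) (h2 : ConvexOn ℝ (Set.Ioo b c) f)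
    (hb : DifferentiableAt ℝ f b) :
    ConvexOn ℝ (Set.Ioo a c) f := by
  have h1' := h1.convexOn_Ioc_of_continuousWithinAt hb.continuousAt.continuousWithinAt
  have h2' := h2.convexOn_Ico_of_continuousWithinAt hb.continuousAt.continuousWithinAt
  refine convexOn_Ioo_of_convexOn_Ioc_of_convexOn_Ico h1' h2' fun x hx z hz => ?_
  calc slope f x b
      ≤ deriv f b := h1'.slope_le_deriv (Ioo_subset_Ioc_self hx) ⟨hx.1.trans hx.2, le_rfl⟩ hx.2 hb
    _ ≤ slope f b z := h2'.deriv_le_slope ⟨le_rfl, hz.1.trans hz.2⟩ (Ioo_subset_Ico_self hz) hz.1 hb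

/-- a function convex on `(a,b)` and on `(b,c)` and differentiable at `b`
is convex on `(a,c)`. -/
theorem convexOn_glue_of_differentiableAt
    (f : ℝ → ℝ) (a b c : ℝ) (hab : a < b) (hbc : b < c)
    (h1 : ConvexOn ℝ (Set.Ioo a b) f) (h2 : ConvexOn ℝ (Set.Ioo b c) f)
    (hb : DifferentiableAt ℝ f b) :
    ConvexOn ℝ (Set.Ioo a c) f :=
  convexOn_glue_of_differentiableAt_general f a b c h1 h2 hb
end

section
/- Let f : I → ℝ be continuous on an interval I. Then f is nondecreasing on I if and only if the lower bilateral derivative D̲f(x) := liminf_{y→x} (f(y)−f(x))/(y−x) satisfies D̲f(x) ≥ 0 for all x ∈ I. -/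
/- Monotonicity makes every difference quotient nonnegative. Conversely, if `D̲f ≥ 0` then for
every `r > 0` the slopes of `-f` to the right of each point are eventually below `r`; the one-sided
comparison principle `image_le_of_liminf_slope_right_le_deriv_boundary`, applied to `-f` with the
constant barrier `-f a`, then gives `f a ≤ f b`. -/

open Filter Set Topology

/-- The lower (bilateral) derivative of `f` at `x`, computed within the set `I`:
`liminf_{y → x, y ∈ I, y ≠ x} (f y - f x)/(y - x)`, as an extended real number. -/
noncomputable def lowerDerivOn (f : ℝ → ℝ) (I : Set ℝ) (x : ℝ) : EReal :=
  Filter.liminf (fun y => (((f y - f x) / (y - x) : ℝ) : EReal)) (nhdsWithin x (I \ {x}))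

lemma lowerDerivOn_eq_liminf_slope (f : ℝ → ℝ) (I : Set ℝ) (x : ℝ) :
    lowerDerivOn f I x = liminf (fun y => ((slope f x y : ℝ) : EReal)) (𝓝[I \ {x}] x) := by
  simp only [lowerDerivOn, slope_def_field]

lemma MonotoneOn.zero_le_lowerDerivOn {f : ℝ → ℝ} {I : Set ℝ} {x : ℝ} (hf : MonotoneOn f I)
    (hx : x ∈ I) : 0 ≤ lowerDerivOn f I x := by
  rw [lowerDerivOn_eq_liminf_slope]
  refine le_liminf_of_le (by isBoundedDefault) ?_
  filter_upwards [self_mem_nhdsWithin] with y hy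
  exact EReal.coe_nonneg.mpr (hf.slope_nonneg hx hy.1)

lemma eventually_lt_slope_of_lt_lowerDerivOn {f : ℝ → ℝ} {I : Set ℝ} {x b r : ℝ} (hxb : x < b)
    (hI : Ioo x b ⊆ I) (hr : (r : EReal) < lowerDerivOn f I x) :
    ∀ᶠ y in 𝓝[>] x, r < slope f x y := by
  rw [lowerDerivOn_eq_liminf_slope] at hr
  have hsub : Ioo x b ⊆ I \ {x} := fun y hy => ⟨hI hy, hy.1.ne'⟩
  rw [← nhdsWithin_Ioo_eq_nhdsGT hxb]
  exact (eventually_lt_of_lt_liminf hr).filter_mono (nhdsWithin_mono x hsub)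
    |>.mono fun y hy => EReal.coe_lt_coe_iff.mp hy

lemma le_of_zero_le_lowerDerivOn {f : ℝ → ℝ} {I : Set ℝ} {a b : ℝ} (hab : a ≤ b)
    (hI : Icc a b ⊆ I) (hfc : ContinuousOn f (Icc a b)) (h : ∀ x ∈ Ico a b, 0 ≤ lowerDerivOn f I x) :
    f a ≤ f b := by
  have hslope : ∀ x ∈ Ico a b, ∀ r : ℝ, 0 < r → ∃ᶠ y in 𝓝[>] x, slope (fun t => -f t) x y < r := by
    intro x hx r hr
    have hlt : ((-r : ℝ) : EReal) < lowerDerivOn f I x :=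
      lt_of_lt_of_le (EReal.coe_lt_coe_iff.mpr (neg_neg_of_pos hr)) (h x hx)
    have hIoo : Ioo x b ⊆ I := Ioo_subset_Icc_self.trans ((Icc_subset_Icc_left hx.1).trans hI)
    refine (eventually_lt_slope_of_lt_lowerDerivOn hx.2 hIoo hlt).frequently.mono fun y hy => ?_
    rw [slope_neg]
    linarith
  have hneg := image_le_of_liminf_slope_right_le_deriv_boundary (f := fun t => -f t)
    (B := fun _ => -f a) (B' := fun _ => 0) hfc.neg le_rfl continuousOn_const
    (fun _ _ => hasDerivWithinAt_const _ _ _) hslope (right_mem_Icc.mpr hab)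
  exact neg_le_neg_iff.mp hneg

lemma monotoneOn_of_zero_le_lowerDerivOn {f : ℝ → ℝ} {I : Set ℝ} (hI : I.OrdConnected)
    (hfc : ContinuousOn f I) (h : ∀ x ∈ I, 0 ≤ lowerDerivOn f I x) : MonotoneOn f I := by
  intro a ha b hb hab
  have hsub : Icc a b ⊆ I := hI.out ha hb
  exact le_of_zero_le_lowerDerivOn hab hsub (hfc.mono hsub)
    fun x hx => h x (hsub (Ico_subset_Icc_self hx))

/-- a continuous function on an interval is nondecreasing iff its lower
bilateral derivative is nonnegative everywhere. -/
theorem monotoneOn_iff_lowerDeriv_nonneg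
    (I : Set ℝ) (hI : I.OrdConnected)
    (f : ℝ → ℝ) (hfc : ContinuousOn f I) :
    MonotoneOn f I ↔ ∀ x ∈ I, (0 : EReal) ≤ lowerDerivOn f I x :=
  ⟨fun hf _ hx => hf.zero_le_lowerDerivOn hx, monotoneOn_of_zero_le_lowerDerivOn hI hfc⟩
end

section
/- Let k : I → ℝ be continuous and p : I → ℝ be differentiable with p(x) ≠ 0 for all x ∈ I. Then for each x ∈ I, the lower bilateral derivative of k/p at x, when p(x) > 0, satisfies D̲(k/p)(x) = (D̲k(x)·p(x) − p′(x)·k(x))/p(x)² whenever k is continuous at x (quotient rule for the lower derivative with differentiable denominator). -/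
open Filter Set Topology

lemma aux_lt_of_lt_affine {a₀ b₀ c : ℝ} (hb : 0 < b₀) {L : EReal}
    (h : (c : EReal) < (b₀ : EReal) * L + (a₀ : EReal)) :
    (((c - a₀) / b₀ : ℝ) : EReal) < L := by
  induction L using EReal.rec with
  | bot =>
      exfalso
      rw [EReal.coe_mul_bot_of_pos hb, EReal.bot_add] at h
      exact (EReal.bot_lt_coe c).not_gt h
  | coe r =>
      have h' : c < b₀ * r + a₀ := by exact_mod_cast h
      rw [EReal.coe_lt_coe_iff, div_lt_iff₀ hb]
      nlinarith
  | top => exact EReal.coe_lt_top _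

lemma aux_affine_lt {a₀ b₀ d : ℝ} (hb : 0 < b₀) {L : EReal}
    (h : (b₀ : EReal) * L + (a₀ : EReal) < (d : EReal)) :
    L < (((d - a₀) / b₀ : ℝ) : EReal) := by
  induction L using EReal.rec with
  | bot => exact EReal.bot_lt_coe _
  | coe r =>
      have h' : b₀ * r + a₀ < d := by exact_mod_cast h
      rw [EReal.coe_lt_coe_iff, lt_div_iff₀ hb]
      nlinarith
  | top =>
      exfalso
      rw [EReal.coe_mul_top_of_pos hb, EReal.top_add_coe] at h
      exact (EReal.coe_lt_top d).not_gt h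

lemma liminf_affine_ge {α : Type*} {l : Filter α} {u A B : α → ℝ} {a₀ b₀ : ℝ}
    (hB : Tendsto B l (𝓝 b₀)) (hA : Tendsto A l (𝓝 a₀)) (hb : 0 < b₀) :
    (b₀ : EReal) * liminf (fun y => ((u y : ℝ) : EReal)) l + (a₀ : EReal)
      ≤ liminf (fun y => ((B y * u y + A y : ℝ) : EReal)) l := by
  rw [le_liminf_iff]
  intro b hbL
  obtain ⟨c, hbc, hcL⟩ := EReal.exists_between_coe_real hbL
  have hc'L := aux_lt_of_lt_affine hb hcL
  have h1 : ∀ᶠ y in l, (c - a₀) / b₀ < u y := by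
    filter_upwards [eventually_lt_of_lt_liminf hc'L] with y hy
    exact_mod_cast hy
  have h2 : ∀ᶠ y in l, 0 < B y := hB.eventually (eventually_gt_nhds hb)
  induction b using EReal.rec with
  | bot => exact Eventually.of_forall fun y => EReal.bot_lt_coe _
  | coe b' =>
      have hb'c : b' < c := by exact_mod_cast hbc
      have htend : Tendsto (fun y => B y * ((c - a₀) / b₀) + A y)
          l (𝓝 (b₀ * ((c - a₀) / b₀) + a₀)) := (hB.mul_const _).add hA
      have hca : b₀ * ((c - a₀) / b₀) + a₀ = c := by field_simp; ring
      rw [hca] at htend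
      have h3 : ∀ᶠ y in l, b' < B y * ((c - a₀) / b₀) + A y :=
        htend.eventually (eventually_gt_nhds hb'c)
      filter_upwards [h1, h2, h3] with y hy1 hy2 hy3
      have : b' < B y * u y + A y := by nlinarith
      exact_mod_cast this
  | top => exact absurd (hbc.trans (EReal.coe_lt_top c)) (lt_irrefl _)

lemma liminf_affine_le {α : Type*} {l : Filter α} [l.NeBot] {u A B : α → ℝ} {a₀ b₀ : ℝ}
    (hB : Tendsto B l (𝓝 b₀)) (hA : Tendsto A l (𝓝 a₀)) (hb : 0 < b₀) :
    liminf (fun y => ((B y * u y + A y : ℝ) : EReal)) l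
      ≤ (b₀ : EReal) * liminf (fun y => ((u y : ℝ) : EReal)) l + (a₀ : EReal) := by
  by_contra hcon
  push_neg at hcon
  obtain ⟨d, hd1, hd2⟩ := EReal.exists_between_coe_real hcon
  obtain ⟨c, hc1, hc2⟩ := EReal.exists_between_coe_real hd2
  have hLd' := aux_affine_lt hb hd1
  have h1 : ∃ᶠ y in l, u y < (d - a₀) / b₀ := by
    refine (frequently_lt_of_liminf_lt (by isBoundedDefault) hLd').mono fun y hy => ?_
    exact_mod_cast hy
  have h2 : ∀ᶠ y in l, 0 < B y := hB.eventually (eventually_gt_nhds hb)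
  have hdc : d < c := by exact_mod_cast hc1
  have htend : Tendsto (fun y => B y * ((d - a₀) / b₀) + A y)
      l (𝓝 (b₀ * ((d - a₀) / b₀) + a₀)) := (hB.mul_const _).add hA
  have hca : b₀ * ((d - a₀) / b₀) + a₀ = d := by field_simp; ring
  rw [hca] at htend
  have h3 : ∀ᶠ y in l, B y * ((d - a₀) / b₀) + A y < c :=
    htend.eventually (eventually_lt_nhds hdc)
  have h4 : ∀ᶠ y in l, (c : EReal) < ((B y * u y + A y : ℝ) : EReal) :=
    eventually_lt_of_lt_liminf hc2
  obtain ⟨y, hy1, hy2, hy3, hy4⟩ := (h1.and_eventually (h2.and (h3.and h4))).exists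
  have hy4' : c < B y * u y + A y := by exact_mod_cast hy4
  nlinarith

lemma liminf_affine {α : Type*} {l : Filter α} [l.NeBot] {u A B : α → ℝ} {a₀ b₀ : ℝ}
    (hB : Tendsto B l (𝓝 b₀)) (hA : Tendsto A l (𝓝 a₀)) (hb : 0 < b₀) :
    liminf (fun y => ((B y * u y + A y : ℝ) : EReal)) l
      = (b₀ : EReal) * liminf (fun y => ((u y : ℝ) : EReal)) l + (a₀ : EReal) :=
  le_antisymm (liminf_affine_le hB hA hb) (liminf_affine_ge hB hA hb)

lemma ereal_helper {b c : ℝ} (hb : 0 < b) (L : EReal) :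
    ((b⁻¹ : ℝ) : EReal) * L + ((-(c) / b ^ 2 : ℝ) : EReal)
      = (L * (b : EReal) - (c : EReal)) / ((b ^ 2 : ℝ) : EReal) := by
  have hb2 : (0 : EReal) < ((b ^ 2 : ℝ) : EReal) := by exact_mod_cast pow_pos hb 2
  have hb2t : ((b ^ 2 : ℝ) : EReal) ≠ ⊤ := EReal.coe_ne_top _
  induction L using EReal.rec with
  | bot =>
      rw [EReal.coe_mul_bot_of_pos (by positivity), EReal.bot_add,
        EReal.bot_mul_of_pos (by exact_mod_cast hb), EReal.bot_sub,
        EReal.bot_div_of_pos_ne_top hb2 hb2t]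
  | coe r =>
      rw [← EReal.coe_mul, ← EReal.coe_mul, ← EReal.coe_add, ← EReal.coe_sub, ← EReal.coe_div,
        EReal.coe_eq_coe_iff]
      field_simp
      ring
  | top =>
      rw [EReal.coe_mul_top_of_pos (by positivity), EReal.top_add_coe,
        EReal.top_mul_of_pos (by exact_mod_cast hb), EReal.top_sub_coe,
        EReal.top_div_of_pos_ne_top hb2 hb2t]

/-- quotient rule for the lower derivative with differentiable
denominator: if `k` is continuous at an interior point `x` of `I`, `p` is
differentiable and nonvanishing on `I` and `p x > 0`, then
`D̲(k/p)(x) = (D̲k(x)·p(x) − p′(x)·k(x)) / p(x)²`. -/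
theorem lowerDeriv_div
    (I : Set ℝ) (hI : I.OrdConnected)
    (k p : ℝ → ℝ)
    (hkc : ContinuousOn k I)
    (hpd : ∀ y ∈ I, DifferentiableAt ℝ p y) (hp0 : ∀ y ∈ I, p y ≠ 0)
    (x : ℝ) (hx : x ∈ interior I) (hpx : 0 < p x)
    (hkx : ContinuousAt k x) :
    lowerDerivOn (fun y => k y / p y) I x =
      (lowerDerivOn k I x * ((p x : ℝ) : EReal) - ((deriv p x * k x : ℝ) : EReal)) /
        (((p x ^ 2 : ℝ)) : EReal) := by
  have hxI : x ∈ I := interior_subset hx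
  have hpdx : DifferentiableAt ℝ p x := hpd x hxI
  have hpxne : p x ≠ 0 := ne_of_gt hpx
  set l := nhdsWithin x (I \ {x}) with hldef
  -- the filter equals the punctured neighborhood filter
  have hleq : l = 𝓝[≠] x := by
    rw [hldef, diff_eq, nhdsWithin_inter_of_mem]
    exact mem_nhdsWithin_of_mem_nhds (mem_interior_iff_mem_nhds.1 hx)
  have hNeBot : l.NeBot := by rw [hleq]; infer_instance
  have hlle : l ≤ 𝓝[≠] x := hleq.le
  have hlx : l ≤ 𝓝 x := hleq.le.trans nhdsWithin_le_nhds
  -- auxiliary functions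
  set B : ℝ → ℝ := fun y => (p y)⁻¹ with hBdef
  set A : ℝ → ℝ := fun y => -(k x) * ((p y - p x) / (y - x)) / (p x * p y) with hAdef
  have hptend : Tendsto p l (𝓝 (p x)) := hpdx.continuousAt.mono_left hlx
  have hB : Tendsto B l (𝓝 ((p x)⁻¹)) := hptend.inv₀ hpxne
  have hslope : Tendsto (fun y => (p y - p x) / (y - x)) l (𝓝 (deriv p x)) := by
    have := hasDerivAt_iff_tendsto_slope.1 hpdx.hasDerivAt
    have h2 : Tendsto (slope p x) l (𝓝 (deriv p x)) := this.mono_left hlle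
    refine h2.congr fun y => ?_
    rw [slope_def_field]
  have hA : Tendsto A l (𝓝 (-(deriv p x * k x) / p x ^ 2)) := by
    have h1 : Tendsto (fun y => -(k x) * ((p y - p x) / (y - x)) / (p x * p y)) l
        (𝓝 (-(k x) * deriv p x / (p x * p x))) :=
      (tendsto_const_nhds.mul hslope).div (tendsto_const_nhds.mul hptend)
        (mul_ne_zero hpxne hpxne)
    have : -(k x) * deriv p x / (p x * p x) = -(deriv p x * k x) / p x ^ 2 := by ring
    rwa [this] at h1
  -- rewrite the difference quotient
  have hcongr : lowerDerivOn (fun y => k y / p y) I x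
      = liminf (fun y => ((B y * ((k y - k x) / (y - x)) + A y : ℝ) : EReal)) l := by
    unfold lowerDerivOn
    refine Filter.liminf_congr ?_
    filter_upwards [self_mem_nhdsWithin] with y hy
    obtain ⟨hyI, hyx⟩ := hy
    have hyx' : y - x ≠ 0 := sub_ne_zero.2 hyx
    have hpy : p y ≠ 0 := hp0 y hyI
    rw [EReal.coe_eq_coe_iff, hBdef, hAdef]
    field_simp
    ring
  rw [hcongr, liminf_affine hB hA (inv_pos.2 hpx)]
  have : lowerDerivOn k I x = liminf (fun y => (((k y - k x) / (y - x) : ℝ) : EReal)) l := rfl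
  rw [this] at *
  exact ereal_helper hpx _
end

section
/- Let I be an interval and f, g : I → ℝ be C² strictly monotone functions with nowhere vanishing first derivatives. Let h : I → ℝ be a C² function with h′ nowhere vanishing satisfying h″/h′ = max(f″/f′, g″/g′) pointwise on I. Then A^[f] ≤ A^[h] and A^[g] ≤ A^[h] (pointwise on all finite tuples from I). -/
open Filter Set Topology

lemma deriv_pos_of_slope (I : Set ℝ) (hI : I.OrdConnected) (f : ℝ → ℝ)
    {x : ℝ} (hx : x ∈ I) (hd : DifferentiableAt ℝ f x) (hm : StrictMonoOn f I)
    (h0 : deriv f x ≠ 0) {y : ℝ} (hy : y ∈ I) (hxy : y ≠ x) : 0 < deriv f x := by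
  rcases h0.lt_or_gt.symm with hpos | hneg
  · exact hpos
  exfalso
  have hslope : Tendsto (slope f x) (𝓝[≠] x) (𝓝 (deriv f x)) :=
    hasDerivAt_iff_tendsto_slope.1 hd.hasDerivAt
  rcases lt_or_gt_of_ne hxy with hlt | hgt
  · -- y < x : approach from the left with Ico y x
    have hsub : Ico y x ⊆ I \ {x} := fun z hz =>
      ⟨hI.out hy hx ⟨hz.1, hz.2.le⟩, fun h => absurd (h ▸ hz.2) (lt_irrefl _)⟩
    have hne : (𝓝[Ico y x] x).NeBot := by
      rw [← mem_closure_iff_nhdsWithin_neBot, closure_Ico hlt.ne]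
      exact ⟨hlt.le, le_refl x⟩
    have ht : Tendsto (slope f x) (𝓝[Ico y x] x) (𝓝 (deriv f x)) :=
      hslope.mono_left (nhdsWithin_mono _ (fun z hz => (hsub hz).2))
    have hev : ∀ᶠ z in 𝓝[Ico y x] x, 0 ≤ slope f x z := by
      filter_upwards [self_mem_nhdsWithin] with z hz
      have hzI : z ∈ I := (hsub hz).1
      have : f z < f x := hm hzI hx hz.2
      rw [slope_def_field]
      have h1 : f z - f x < 0 := by linarith
      have h2 : z - x < 0 := by linarith [hz.2]
      exact (div_pos_of_neg_of_neg h1 h2).le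
    linarith [ge_of_tendsto ht hev]
  · -- y > x
    have hsub : Ioc x y ⊆ I \ {x} := fun z hz =>
      ⟨hI.out hx hy ⟨hz.1.le, hz.2⟩, fun h => absurd (h ▸ hz.1) (lt_irrefl _)⟩
    have hne : (𝓝[Ioc x y] x).NeBot := by
      rw [← mem_closure_iff_nhdsWithin_neBot, closure_Ioc hgt.ne]
      exact ⟨le_refl x, hgt.le⟩
    have ht : Tendsto (slope f x) (𝓝[Ioc x y] x) (𝓝 (deriv f x)) :=
      hslope.mono_left (nhdsWithin_mono _ (fun z hz => (hsub hz).2))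
    have hev : ∀ᶠ z in 𝓝[Ioc x y] x, 0 ≤ slope f x z := by
      filter_upwards [self_mem_nhdsWithin] with z hz
      have hzI : z ∈ I := (hsub hz).1
      have : f x < f z := hm hx hzI hz.1
      rw [slope_def_field]
      have h1 : 0 < f z - f x := by linarith
      have h2 : 0 < z - x := by linarith [hz.1]
      exact (div_pos h1 h2).le
    linarith [ge_of_tendsto ht hev]

lemma key_ineq (I : Set ℝ) (hI : Convex ℝ I) (f h : ℝ → ℝ)
    (hfd : ∀ x ∈ I, DifferentiableAt ℝ f x) (hfd2 : ∀ x ∈ I, DifferentiableAt ℝ (deriv f) x)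
    (hhd : ∀ x ∈ I, DifferentiableAt ℝ h x) (hhd2 : ∀ x ∈ I, DifferentiableAt ℝ (deriv h) x)
    (hf' : ∀ x ∈ I, 0 < deriv f x) (hh' : ∀ x ∈ I, 0 < deriv h x)
    (hle : ∀ x ∈ I, deriv (deriv f) x / deriv f x ≤ deriv (deriv h) x / deriv h x)
    {b x : ℝ} (hb : b ∈ I) (hx : x ∈ I) :
    f x - f b ≤ (deriv f b / deriv h b) * (h x - h b) := by
  set c := deriv f b / deriv h b with hc
  set r := fun y => deriv f y / deriv h y with hr
  have hrcont : ContinuousOn r I :=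
    ContinuousOn.div (fun y hy => (hfd2 y hy).continuousAt.continuousWithinAt)
      (fun y hy => (hhd2 y hy).continuousAt.continuousWithinAt)
      (fun y hy => (hh' y hy).ne')
  have hrderiv : ∀ y ∈ interior I, HasDerivAt r
      ((deriv (deriv f) y * deriv h y - deriv f y * deriv (deriv h) y) / deriv h y ^ 2) y := by
    intro y hy
    have hyI : y ∈ I := interior_subset hy
    exact ((hfd2 y hyI).hasDerivAt).div ((hhd2 y hyI).hasDerivAt) (hh' y hyI).ne'
  have hr_anti : AntitoneOn r I := by
    apply antitoneOn_of_deriv_nonpos hI hrcont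
      (fun y hy => (hrderiv y hy).differentiableAt.differentiableWithinAt)
    intro y hy
    have hyI : y ∈ I := interior_subset hy
    rw [(hrderiv y hy).deriv]
    apply div_nonpos_of_nonpos_of_nonneg _ (sq_nonneg _)
    have := (div_le_div_iff₀ (hf' y hyI) (hh' y hyI)).mp (hle y hyI)
    linarith
  set G := fun y => c * h y - f y with hG
  have hGd : ∀ y ∈ I, HasDerivAt G (c * deriv h y - deriv f y) y := fun y hy =>
    (((hhd y hy).hasDerivAt).const_mul c).sub ((hfd y hy).hasDerivAt)
  have hGcont : ContinuousOn G I := fun y hy =>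
    (hGd y hy).differentiableAt.continuousAt.continuousWithinAt
  have key : G b ≤ G x := by
    rcases le_total x b with hxb | hbx
    · -- G antitone on I ∩ Iic b
      have hanti : AntitoneOn G (I ∩ Iic b) := by
        apply antitoneOn_of_deriv_nonpos (hI.inter (convex_Iic b))
          (hGcont.mono inter_subset_left)
        · intro y hy
          have hyI : y ∈ I := (interior_subset hy).1
          exact (hGd y hyI).differentiableAt.differentiableWithinAt
        · intro y hy
          have hyI : y ∈ I := (interior_subset hy).1
          have hyb : y ≤ b := (interior_subset hy).2
          rw [(hGd y hyI).deriv]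
          have h1 : r b ≤ r y := hr_anti hyI hb hyb
          have h2 : c * deriv h y ≤ deriv f y := by
            have := mul_le_mul_of_nonneg_right h1 (hh' y hyI).le
            rwa [hr, div_mul_cancel₀ _ (hh' y hyI).ne'] at this
          linarith
      exact hanti ⟨hx, hxb⟩ ⟨hb, le_refl b⟩ hxb
    · have hmono : MonotoneOn G (I ∩ Ici b) := by
        apply monotoneOn_of_deriv_nonneg (hI.inter (convex_Ici b))
          (hGcont.mono inter_subset_left)
        · intro y hy
          have hyI : y ∈ I := (interior_subset hy).1
          exact (hGd y hyI).differentiableAt.differentiableWithinAt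
        · intro y hy
          have hyI : y ∈ I := (interior_subset hy).1
          have hyb : b ≤ y := (interior_subset hy).2
          rw [(hGd y hyI).deriv]
          have h1 : r y ≤ r b := hr_anti hb hyI hyb
          have h2 : deriv f y ≤ c * deriv h y := by
            have := mul_le_mul_of_nonneg_right h1 (hh' y hyI).le
            rwa [hr, div_mul_cancel₀ _ (hh' y hyI).ne'] at this
          linarith
      exact hmono ⟨hb, le_refl b⟩ ⟨hx, hbx⟩ hbx
  simp only [hG] at key
  nlinarith [key]

lemma qale_base (I : Set ℝ) (hI : Convex ℝ I) (f h : ℝ → ℝ)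
    (hfd : ∀ x ∈ I, DifferentiableAt ℝ f x) (hfd2 : ∀ x ∈ I, DifferentiableAt ℝ (deriv f) x)
    (hhd : ∀ x ∈ I, DifferentiableAt ℝ h x) (hhd2 : ∀ x ∈ I, DifferentiableAt ℝ (deriv h) x)
    (hf' : ∀ x ∈ I, 0 < deriv f x) (hh' : ∀ x ∈ I, 0 < deriv h x)
    (hle : ∀ x ∈ I, deriv (deriv f) x / deriv f x ≤ deriv (deriv h) x / deriv h x) :
    QALE I f h := by
  intro n hn v hv a b ha hb
  have hmono : StrictMonoOn f I :=
    strictMonoOn_of_deriv_pos hI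
      (fun y hy => (hfd y hy).continuousAt.continuousWithinAt)
      (fun y hy => hf' y (interior_subset hy))
  set c := deriv f b / deriv h b with hc
  have key : ∀ i, f (v i) - f b ≤ c * (h (v i) - h b) := fun i =>
    key_ineq I hI f h hfd hfd2 hhd hhd2 hf' hh' hle hb.1 (hv i)
  have hn0 : (n : ℝ) ≠ 0 := Nat.cast_ne_zero.mpr hn.ne'
  have sumh : ∑ i, h (v i) = n * h b := by
    have := hb.2
    field_simp at this
    linarith
  have sumf : (∑ i, f (v i)) ≤ n * f b := by
    have h1 : (∑ i, f (v i)) ≤ ∑ i, (f b + c * (h (v i) - h b)) :=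
      Finset.sum_le_sum fun i _ => by linarith [key i]
    have h2 : ∑ i : Fin n, (f b + c * (h (v i) - h b))
        = n * f b + c * ((∑ i, h (v i)) - n * h b) := by
      rw [Finset.sum_add_distrib, Finset.sum_const, Finset.card_univ, Fintype.card_fin,
        ← Finset.mul_sum, Finset.sum_sub_distrib, Finset.sum_const, Finset.card_univ,
        Fintype.card_fin]
      push_cast; ring
    rw [h2, sumh] at h1
    linarith
  have hfab : f a ≤ f b := by
    rw [ha.2, div_le_iff₀ (by positivity : (0:ℝ) < n)]
    linarith
  by_contra hab
  push_neg at hab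
  exact absurd hfab (not_le.mpr (hmono hb.1 ha.1 hab))

lemma isQAM'_neg (I : Set ℝ) (f : ℝ → ℝ) {n : ℕ} (v : Fin n → ℝ) (m : ℝ) :
    IsQAM I (fun x => -f x) v m ↔ IsQAM I f v m := by
  unfold IsQAM
  constructor <;> rintro ⟨h1, h2⟩ <;> refine ⟨h1, ?_⟩
  · simp only [Finset.sum_neg_distrib, neg_div, neg_inj] at h2
    exact h2
  · simp only [Finset.sum_neg_distrib, neg_div, neg_inj]
    exact h2

lemma deriv_sign (I : Set ℝ) (hI : I.OrdConnected) (f : ℝ → ℝ)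
    (hfd : ∀ x ∈ I, DifferentiableAt ℝ f x)
    (hf0 : ∀ x ∈ I, deriv f x ≠ 0)
    (hf : StrictMonoOn f I ∨ StrictAntiOn f I)
    {p q : ℝ} (hp : p ∈ I) (hq : q ∈ I) (hpq : p ≠ q) :
    (∀ x ∈ I, 0 < deriv f x) ∨ (∀ x ∈ I, deriv f x < 0) := by
  have hy : ∀ x : ℝ, ∃ y ∈ I, y ≠ x := by
    intro x
    rcases eq_or_ne p x with rfl | hne
    · exact ⟨q, hq, fun hh => hpq hh.symm⟩
    · exact ⟨p, hp, hne⟩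
  rcases hf with hm | hm
  · left; intro x hx
    obtain ⟨y, hyI, hyx⟩ := hy x
    exact deriv_pos_of_slope I hI f hx (hfd x hx) hm (hf0 x hx) hyI hyx
  · right; intro x hx
    obtain ⟨y, hyI, hyx⟩ := hy x
    have hmono : StrictMonoOn (fun z => -f z) I := fun u hu w hw huw =>
      neg_lt_neg (hm hu hw huw)
    have h0' : deriv (fun z => -f z) x ≠ 0 := by
      rw [deriv.fun_neg]; exact neg_ne_zero.mpr (hf0 x hx)
    have := deriv_pos_of_slope I hI (fun z => -f z) hx (hfd x hx).neg hmono h0' hyI hyx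
    rw [deriv.fun_neg] at this
    linarith

lemma qale_of_ratio_le (I : Set ℝ) (hI : I.OrdConnected) (f h : ℝ → ℝ)
    (hfd : ∀ x ∈ I, DifferentiableAt ℝ f x) (hfd2 : ∀ x ∈ I, DifferentiableAt ℝ (deriv f) x)
    (hf0 : ∀ x ∈ I, deriv f x ≠ 0)
    (hf : StrictMonoOn f I ∨ StrictAntiOn f I)
    (hhd : ∀ x ∈ I, DifferentiableAt ℝ h x) (hhd2 : ∀ x ∈ I, DifferentiableAt ℝ (deriv h) x)
    (hh0 : ∀ x ∈ I, deriv h x ≠ 0)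
    (hh : StrictMonoOn h I ∨ StrictAntiOn h I)
    (hle : ∀ x ∈ I, deriv (deriv f) x / deriv f x ≤ deriv (deriv h) x / deriv h x) :
    QALE I f h := by
  have hconv : Convex ℝ I := hI.convex
  by_cases hnt : ∃ p ∈ I, ∃ q ∈ I, p ≠ q
  swap
  · push_neg at hnt
    intro n hn v hv a b ha hb
    exact le_of_eq (hnt a ha.1 b hb.1)
  obtain ⟨p, hp, q, hq, hpq⟩ := hnt
  have hfsign := deriv_sign I hI f hfd hf0 hf hp hq hpq
  have hhsign := deriv_sign I hI h hhd hh0 hh hp hq hpq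
  -- facts about negation
  have Nd2 : ∀ (u : ℝ → ℝ), (∀ x ∈ I, DifferentiableAt ℝ (deriv u) x) →
      ∀ x ∈ I, DifferentiableAt ℝ (deriv (fun z => -u z)) x := by
    intro u hu x hx
    rw [deriv.fun_neg']
    exact (hu x hx).neg
  have Nd1 : ∀ (u : ℝ → ℝ) (x : ℝ), deriv (fun z => -u z) x = -deriv u x := fun u x => deriv.fun_neg
  have Ndd : ∀ (u : ℝ → ℝ) (x : ℝ),
      deriv (deriv (fun z => -u z)) x = -deriv (deriv u) x := by
    intro u x
    rw [deriv.fun_neg']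
    exact deriv.fun_neg
  rcases hfsign with hfp | hfn <;> rcases hhsign with hhp | hhn
  · exact qale_base I hconv f h hfd hfd2 hhd hhd2 hfp hhp hle
  · -- f' > 0, h' < 0 : use -h
    have base := qale_base I hconv f (fun z => -h z) hfd hfd2
      (fun x hx => (hhd x hx).neg) (Nd2 h hhd2) hfp
      (fun x hx => by rw [Nd1]; linarith [hhn x hx])
      (fun x hx => by rw [Nd1, Ndd, neg_div_neg_eq]; exact hle x hx)
    intro n hn v hv a b ha hb
    exact base n hn v hv a b ha ((isQAM'_neg I h v b).2 hb)
  · -- f' < 0, h' > 0 : use -f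
    have base := qale_base I hconv (fun z => -f z) h
      (fun x hx => (hfd x hx).neg) (Nd2 f hfd2) hhd hhd2
      (fun x hx => by rw [Nd1]; linarith [hfn x hx]) hhp
      (fun x hx => by rw [Nd1, Ndd, neg_div_neg_eq]; exact hle x hx)
    intro n hn v hv a b ha hb
    exact base n hn v hv a b ((isQAM'_neg I f v a).2 ha) hb
  · -- both negative
    have base := qale_base I hconv (fun z => -f z) (fun z => -h z)
      (fun x hx => (hfd x hx).neg) (Nd2 f hfd2)
      (fun x hx => (hhd x hx).neg) (Nd2 h hhd2)
      (fun x hx => by rw [Nd1]; linarith [hfn x hx])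
      (fun x hx => by rw [Nd1]; linarith [hhn x hx])
      (fun x hx => by rw [Nd1, Nd1, Ndd, Ndd, neg_div_neg_eq, neg_div_neg_eq]; exact hle x hx)
    intro n hn v hv a b ha hb
    exact base n hn v hv a b ((isQAM'_neg I f v a).2 ha) ((isQAM'_neg I h v b).2 hb)

lemma mono_or_anti (I : Set ℝ) (hconv : Convex ℝ I) (h : ℝ → ℝ)
    (hhd : ∀ x ∈ I, DifferentiableAt ℝ h x) (hhd2 : ∀ x ∈ I, DifferentiableAt ℝ (deriv h) x)
    (hh0 : ∀ x ∈ I, deriv h x ≠ 0) :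
    StrictMonoOn h I ∨ StrictAntiOn h I := by
  rcases eq_empty_or_nonempty I with rfl | ⟨x0, hx0⟩
  · left; intro x hx; exact absurd hx (notMem_empty x)
  have hcont : ContinuousOn h I := fun y hy => (hhd y hy).continuousAt.continuousWithinAt
  have hdcont : ContinuousOn (deriv h) I := fun y hy =>
    (hhd2 y hy).continuousAt.continuousWithinAt
  have himg : (deriv h '' I).OrdConnected :=
    (hconv.isPreconnected.image _ hdcont).ordConnected
  rcases (hh0 x0 hx0).lt_or_gt with hneg | hpos
  · right
    apply strictAntiOn_of_deriv_neg hconv hcont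
    intro x hx
    have hxI : x ∈ I := interior_subset hx
    rcases (hh0 x hxI).lt_or_gt with hn | hp
    · exact hn
    · exfalso
      have h0mem : (0 : ℝ) ∈ deriv h '' I :=
        himg.out ⟨x0, hx0, rfl⟩ ⟨x, hxI, rfl⟩ ⟨hneg.le, hp.le⟩
      obtain ⟨z, hz, hz0⟩ := h0mem
      exact hh0 z hz hz0
  · left
    apply strictMonoOn_of_deriv_pos hconv hcont
    intro x hx
    have hxI : x ∈ I := interior_subset hx
    rcases (hh0 x hxI).lt_or_gt with hn | hp
    · exfalso
      have h0mem : (0 : ℝ) ∈ deriv h '' I :=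
        himg.out ⟨x, hxI, rfl⟩ ⟨x0, hx0, rfl⟩ ⟨hn.le, hpos.le⟩
      obtain ⟨z, hz, hz0⟩ := h0mem
      exact hh0 z hz hz0
    · exact hp

/-- if `f, g` are C² strictly monotone with nowhere vanishing first
derivatives and `h` is C² with `h' ≠ 0` and `h''/h' = max (f''/f') (g''/g')` on `I`,
then `A^[f] ≤ A^[h]` and `A^[g] ≤ A^[h]`. -/
theorem qale_sup_upper_bound
    (I : Set ℝ) (hI : I.OrdConnected)
    (f g h : ℝ → ℝ)
    (hfd : ∀ x ∈ I, DifferentiableAt ℝ f x) (hfd2 : ∀ x ∈ I, DifferentiableAt ℝ (deriv f) x)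
    (hfc2 : ContinuousOn (deriv (deriv f)) I)
    (hf0 : ∀ x ∈ I, deriv f x ≠ 0)
    (hf : StrictMonoOn f I ∨ StrictAntiOn f I)
    (hgd : ∀ x ∈ I, DifferentiableAt ℝ g x) (hgd2 : ∀ x ∈ I, DifferentiableAt ℝ (deriv g) x)
    (hgc2 : ContinuousOn (deriv (deriv g)) I)
    (hg0 : ∀ x ∈ I, deriv g x ≠ 0)
    (hg : StrictMonoOn g I ∨ StrictAntiOn g I)
    (hhd : ∀ x ∈ I, DifferentiableAt ℝ h x) (hhd2 : ∀ x ∈ I, DifferentiableAt ℝ (deriv h) x)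
    (hhc2 : ContinuousOn (deriv (deriv h)) I)
    (hh0 : ∀ x ∈ I, deriv h x ≠ 0)
    (hmax : ∀ x ∈ I,
      deriv (deriv h) x / deriv h x =
        max (deriv (deriv f) x / deriv f x) (deriv (deriv g) x / deriv g x)) :
    QALE I f h ∧ QALE I g h := by
  have hfg : StrictMonoOn h I ∨ StrictAntiOn h I :=
    mono_or_anti I hI.convex h hhd hhd2 hh0
  constructor
  · exact qale_of_ratio_le I hI f h hfd hfd2 hf0 hf hhd hhd2 hh0 hfg
      (fun x hx => (hmax x hx).symm ▸ le_max_left _ _)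
  · exact qale_of_ratio_le I hI g h hgd hgd2 hg0 hg hhd hhd2 hh0 hfg
      (fun x hx => (hmax x hx).symm ▸ le_max_right _ _)
end
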